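/- arXiv:1908.09385 — 5 statements merged into one kernel-verified Lean document; each statement's English description precedes it below -/
import Mathlib

section
/- Let ω: ℝ → ℝ be a Schwartz function, and let u_xx = H(ω') be the Hilbert transform of its derivative ω'. Then ∫_ℝ u_xx(x)·ω'(x)·x dx = 0. -/
open MeasureTheory Filter Real Set Topology

noncomputable section
namespace HilbertAux


def S (ε : ℝ) : Set ℝ := {t : ℝ | ε < |t|}

lemma measurableSet_S (ε : ℝ) : MeasurableSet (S ε) :=
  (isOpen_lt continuous_const continuous_abs).measurableSet

lemma measurableSet_S' (ε x : ℝ) : MeasurableSet {y : ℝ | ε < |x - y|} :=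
  measurableSet_lt measurable_const ((measurable_const.sub measurable_id).abs)

def T (φ : SchwartzMap ℝ ℝ) (ε x : ℝ) : ℝ := ∫ y in {y : ℝ | ε < |x - y|}, φ y / (x - y)

lemma integrableOn_div {g : ℝ → ℝ} (hg : Integrable g) (hgm : Measurable g)
    {ε : ℝ} (hε : 0 < ε) : IntegrableOn (fun t => g t / t) (S ε) := by
  have hmeas : AEStronglyMeasurable (fun t : ℝ => g t / t) (volume.restrict (S ε)) :=
    (hgm.div measurable_id).aestronglyMeasurable
  refine Integrable.mono' ((hg.norm.const_mul ε⁻¹).integrableOn) hmeas ?_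
  refine (ae_restrict_iff' (measurableSet_S ε)).2 (ae_of_all _ fun t ht => ?_)
  have h1 : ε < |t| := ht
  rw [norm_div, Real.norm_eq_abs t, div_le_iff₀ (lt_trans hε h1)]
  calc ‖g t‖ = 1 * ‖g t‖ := (one_mul _).symm
    _ ≤ (ε⁻¹ * |t|) * ‖g t‖ := by
        apply mul_le_mul_of_nonneg_right _ (norm_nonneg _)
        rw [le_inv_mul_iff₀ hε, mul_one]
        exact h1.le
    _ = ε⁻¹ * ‖g t‖ * |t| := by ring

lemma integrableOn_ker (φ : SchwartzMap ℝ ℝ) {ε : ℝ} (hε : 0 < ε) (x : ℝ) :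
    IntegrableOn (fun t => φ (x - t) / t) (S ε) :=
  integrableOn_div (((φ.integrable (μ := volume))).comp_sub_left x)
    (φ.continuous.measurable.comp (measurable_const.sub measurable_id)) hε

lemma integrableOn_ker' (φ : SchwartzMap ℝ ℝ) {ε : ℝ} (hε : 0 < ε) (x : ℝ) :
    IntegrableOn (fun t => φ (x + t) / t) (S ε) :=
  integrableOn_div (((φ.integrable (μ := volume))).comp_add_left x)
    (φ.continuous.measurable.comp (measurable_const.add measurable_id)) hε

lemma T_eq (φ : SchwartzMap ℝ ℝ) (ε x : ℝ) :
    T φ ε x = ∫ t in S ε, φ (x - t) / t := by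
  have h1 : ∀ y : ℝ, {y : ℝ | ε < |x - y|}.indicator (fun y => φ y / (x - y)) y
      = (S ε).indicator (fun t => φ (x - t) / t) (x - y) := by
    intro y
    by_cases h : ε < |x - y| <;>
      simp [Set.indicator, S, h, Set.mem_setOf_eq]
  rw [T, ← integral_indicator (measurableSet_S' ε x), ← integral_indicator (measurableSet_S ε)]
  rw [← integral_sub_left_eq_self ((S ε).indicator (fun t => φ (x - t) / t)) volume x]
  exact integral_congr_ae (ae_of_all _ h1)

lemma T_eq_neg (φ : SchwartzMap ℝ ℝ) (ε x : ℝ) :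
    T φ ε x = ∫ t in S ε, -φ (x + t) / t := by
  rw [T_eq]
  rw [← integral_indicator (measurableSet_S ε), ← integral_indicator (measurableSet_S ε)]
  rw [← integral_neg_eq_self ((S ε).indicator (fun t => φ (x - t) / t)) volume]
  apply integral_congr_ae (ae_of_all _ _)
  intro t
  by_cases h : ε < |t|
  · have h' : ε < |(-t)| := by rwa [abs_neg]
    simp only [Set.indicator, S, Set.mem_setOf_eq, h, h', if_pos]
    rw [sub_neg_eq_add]
    ring
  · have h' : ¬ ε < |(-t)| := by rwa [abs_neg]
    simp [Set.indicator, S, h, h']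

lemma T_eq_sym (φ : SchwartzMap ℝ ℝ) {ε : ℝ} (hε : 0 < ε) (x : ℝ) :
    T φ ε x = ∫ t in S ε, (φ (x - t) - φ (x + t)) / (2 * t) := by
  have h1 := T_eq φ ε x
  have h2 := T_eq_neg φ ε x
  have i1 := integrableOn_ker φ hε x
  have i2 : IntegrableOn (fun t => -φ (x + t) / t) (S ε) := by
    simp only [neg_div]
    exact (integrableOn_ker' φ hε x).neg
  have h3 : T φ ε x = (T φ ε x + T φ ε x) / 2 := by ring
  rw [h3]
  nth_rewrite 1 [h1]
  nth_rewrite 1 [h2]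
  rw [← integral_add i1 i2, ← integral_div]
  apply setIntegral_congr_fun (measurableSet_S ε)
  intro t ht
  have : t ≠ 0 := by
    intro h; rw [h] at ht; simp [S, Set.mem_setOf_eq] at ht; linarith [hε, ht]
  field_simp
  ring


variable (φ : SchwartzMap ℝ ℝ)

def M (φ : SchwartzMap ℝ ℝ) : ℝ := SchwartzMap.seminorm ℝ 0 0 (SchwartzMap.derivCLM ℝ ℝ φ)

lemma M_nonneg : 0 ≤ M φ := apply_nonneg _ _

lemma lip (a b : ℝ) : |φ a - φ b| ≤ M φ * |a - b| := by
  have h : LipschitzWith (M φ).toNNReal φ := by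
    apply lipschitzWith_of_nnnorm_deriv_le φ.differentiable
    intro x
    have h1 : ‖deriv φ x‖ ≤ M φ := by
      have := SchwartzMap.norm_le_seminorm ℝ (SchwartzMap.derivCLM ℝ ℝ φ) x
      rwa [SchwartzMap.derivCLM_apply] at this
    rw [← Real.toNNReal_coe (r := ‖deriv φ x‖₊)]
    exact Real.toNNReal_mono (by simpa using h1)
  have := h.dist_le_mul a b
  rw [Real.dist_eq, Real.dist_eq] at this
  refine this.trans ?_
  gcongr
  exact Real.coe_toNNReal _ (M_nonneg φ) |>.le

def ψ (φ : SchwartzMap ℝ ℝ) (x t : ℝ) : ℝ := (φ (x - t) - φ (x + t)) / (2 * t)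

def L1 (φ : SchwartzMap ℝ ℝ) : ℝ := ∫ t : ℝ, ‖φ t‖

lemma L1_nonneg : 0 ≤ L1 φ := integral_nonneg fun t => norm_nonneg _

-- integrability of ψ on any measurable subset of S ε
lemma integrableOn_psi {ε : ℝ} (hε : 0 < ε) (x : ℝ) {A : Set ℝ} (hA : A ⊆ S ε) :
    IntegrableOn (ψ φ x) A := by
  apply IntegrableOn.mono_set _ hA
  have h1 := ((integrableOn_ker φ hε x).sub (integrableOn_ker' φ hε x)).div_const 2
  refine MeasureTheory.IntegrableOn.congr_fun h1 (fun t ht => ?_) (measurableSet_S ε)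
  have ht0 : t ≠ 0 := by
    intro h; rw [h] at ht; simp only [S, Set.mem_setOf_eq, abs_zero] at ht; linarith
  simp only [Pi.sub_apply, ψ]
  rw [div_sub_div_same, div_div, mul_comm]

lemma psi_bound_near (x t : ℝ) (ht : t ≠ 0) : |ψ φ x t| ≤ M φ := by
  have h1 := lip φ (x - t) (x + t)
  have h2 : |x - t - (x + t)| = 2 * |t| := by
    rw [show x - t - (x + t) = -(2*t) by ring, abs_neg, abs_mul]
    norm_num
  rw [ψ, abs_div, abs_mul]
  rw [div_le_iff₀ (by positivity)]
  calc |φ (x - t) - φ (x + t)| ≤ M φ * (2 * |t|) := by rw [← h2]; exact h1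
    _ = M φ * (|(2:ℝ)| * |t|) := by norm_num

lemma psi_bound_far (x t : ℝ) (ht : 1 < |t|) :
    |ψ φ x t| ≤ (‖φ (x - t)‖ + ‖φ (x + t)‖) / 2 := by
  rw [ψ, abs_div, abs_mul]
  have h0 : (0:ℝ) < |t| := lt_trans one_pos ht
  rw [div_le_iff₀ (by positivity)]
  calc |φ (x - t) - φ (x + t)| ≤ ‖φ (x - t)‖ + ‖φ (x + t)‖ := abs_sub _ _
    _ = (‖φ (x - t)‖ + ‖φ (x + t)‖) / 2 * (|(2:ℝ)| * 1) := by norm_num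
    _ ≤ (‖φ (x - t)‖ + ‖φ (x + t)‖) / 2 * (|(2:ℝ)| * |t|) := by
        gcongr

lemma T_bound {ε : ℝ} (hε : 0 < ε) (x : ℝ) : |T φ ε x| ≤ 2 * M φ + L1 φ := by
  rw [T_eq_sym φ hε x]
  have habs : |∫ t in S ε, ψ φ x t| ≤ ∫ t in S ε, |ψ φ x t| := by
    simpa [Real.norm_eq_abs] using
      norm_integral_le_integral_norm (μ := volume.restrict (S ε)) (ψ φ x)
  refine habs.trans ?_
  set A := S ε ∩ Icc (-1 : ℝ) 1 with hA
  set B := S ε ∩ (Icc (-1 : ℝ) 1)ᶜ with hB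
  have hAm : MeasurableSet A := (measurableSet_S ε).inter measurableSet_Icc
  have hBm : MeasurableSet B := (measurableSet_S ε).inter measurableSet_Icc.compl
  have hiA : IntegrableOn (fun t => |ψ φ x t|) A :=
    ((integrableOn_psi φ hε x (inter_subset_left)).abs)
  have hiB : IntegrableOn (fun t => |ψ φ x t|) B :=
    ((integrableOn_psi φ hε x (inter_subset_left)).abs)
  have hdisj : Disjoint A B := Set.disjoint_left.2 fun t htA htB => htB.2 htA.2
  have hsplit : ∫ t in S ε, |ψ φ x t| = (∫ t in A, |ψ φ x t|) + ∫ t in B, |ψ φ x t| := by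
    have h := setIntegral_union hdisj hBm hiA hiB
    rw [show A ∪ B = S ε from Set.inter_union_compl _ _] at h
    exact h
  rw [hsplit]
  have hvolA : (volume A).toReal ≤ 2 := by
    have h1 : volume A ≤ volume (Icc (-1 : ℝ) 1) := measure_mono inter_subset_right
    have h2 : volume (Icc (-1 : ℝ) 1) = ENNReal.ofReal 2 := by
      rw [Real.volume_Icc]; norm_num
    calc (volume A).toReal ≤ (ENNReal.ofReal 2).toReal := by
          apply ENNReal.toReal_mono _ (h2 ▸ h1)
          simp
      _ = 2 := by simp
  have hAfin : volume A < ⊤ := by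
    refine lt_of_le_of_lt (measure_mono inter_subset_right) ?_
    rw [Real.volume_Icc]; exact ENNReal.ofReal_lt_top
  have hbound1 : ∫ t in A, |ψ φ x t| ≤ 2 * M φ := by
    have h1 : ∫ t in A, |ψ φ x t| ≤ ∫ _ in A, M φ := by
      apply setIntegral_mono_on hiA (integrableOn_const hAfin.ne) hAm
      intro t ht
      have ht0 : t ≠ 0 := by
        intro h
        have := ht.1
        rw [h] at this
        simp only [S, Set.mem_setOf_eq, abs_zero] at this
        linarith
      exact psi_bound_near φ x t ht0
    refine h1.trans ?_
    rw [setIntegral_const, smul_eq_mul]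
    exact mul_le_mul_of_nonneg_right hvolA (M_nonneg φ)
  have hbound2 : ∫ t in B, |ψ φ x t| ≤ L1 φ := by
    have hig : Integrable (fun t : ℝ => (‖φ (x - t)‖ + ‖φ (x + t)‖) / 2) := by
      exact ((((φ.integrable (μ := volume)).comp_sub_left x).norm.add
        (((φ.integrable (μ := volume)).comp_add_left x).norm)).div_const 2)
    have h1 : ∫ t in B, |ψ φ x t| ≤ ∫ t in B, (‖φ (x - t)‖ + ‖φ (x + t)‖) / 2 := by
      apply setIntegral_mono_on hiB hig.integrableOn hBm
      intro t ht
      have ht1 : 1 < |t| := by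
        have := ht.2
        simp only [Set.mem_compl_iff, Set.mem_Icc, not_and_or, not_le] at this
        rcases this with h | h
        · rw [abs_of_neg (by linarith)]; linarith
        · rw [abs_of_pos (by linarith)]; linarith
      exact psi_bound_far φ x t ht1
    refine h1.trans ?_
    have h2 : ∫ t in B, (‖φ (x - t)‖ + ‖φ (x + t)‖) / 2
        ≤ ∫ t : ℝ, (‖φ (x - t)‖ + ‖φ (x + t)‖) / 2 := by
      apply setIntegral_le_integral hig
      exact ae_of_all _ fun t => by positivity
    refine h2.trans ?_
    have h3 : ∫ t : ℝ, (‖φ (x - t)‖ + ‖φ (x + t)‖) / 2 = (L1 φ + L1 φ) / 2 := by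
      rw [integral_div, integral_add (((φ.integrable (μ := volume)).comp_sub_left x).norm)
        (((φ.integrable (μ := volume)).comp_add_left x).norm)]
      congr 2
      · exact integral_sub_left_eq_self (fun t => ‖φ t‖) volume x
      · exact integral_add_left_eq_self (fun t => ‖φ t‖) x
    rw [h3]
    linarith [L1_nonneg φ]
  linarith

/-! ### Product kernel machinery -/

def K (φ : SchwartzMap ℝ ℝ) (ε : ℝ) : ℝ × ℝ → ℝ :=
  fun p => if ε < |p.1 - p.2| then p.1 * φ p.1 * φ p.2 / (p.1 - p.2) else 0

def G (φ : SchwartzMap ℝ ℝ) (ε : ℝ) : ℝ × ℝ → ℝ :=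
  fun p => if ε < |p.1 - p.2| then φ p.1 * φ p.2 else 0

def G' (φ : SchwartzMap ℝ ℝ) (ε : ℝ) : ℝ × ℝ → ℝ :=
  fun p => if ε < |p.1 - p.2| then 0 else φ p.1 * φ p.2

lemma measurableSet_P (ε : ℝ) : MeasurableSet {p : ℝ × ℝ | ε < |p.1 - p.2|} :=
  measurableSet_lt measurable_const ((measurable_fst.sub measurable_snd).abs)

lemma K_measurable (ε : ℝ) : Measurable (K φ ε) := by
  apply Measurable.ite (measurableSet_P ε) _ measurable_const
  exact ((measurable_fst.mul (φ.continuous.measurable.comp measurable_fst)).mul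
    (φ.continuous.measurable.comp measurable_snd)).div (measurable_fst.sub measurable_snd)

lemma int_xphi : Integrable (fun x : ℝ => x * φ x) := by
  refine (φ.integrable_pow_mul volume 1).mono'
    ((measurable_id.mul φ.continuous.measurable).aestronglyMeasurable) ?_
  refine ae_of_all _ fun x => ?_
  rw [Real.norm_eq_abs, abs_mul, pow_one]
  rw [Real.norm_eq_abs]
  exact le_of_eq (by rfl)

lemma K_integrable {ε : ℝ} (hε : 0 < ε) :
    Integrable (K φ ε) (volume.prod volume) := by
  have hb : Integrable (fun p : ℝ × ℝ => ε⁻¹ * (‖p.1 * φ p.1‖ * ‖φ p.2‖))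
      (volume.prod volume) :=
    (((int_xphi φ).norm.mul_prod (φ.integrable (μ := volume)).norm).const_mul ε⁻¹)
  refine hb.mono' (K_measurable φ ε).aestronglyMeasurable (ae_of_all _ fun p => ?_)
  rw [K]
  by_cases h : ε < |p.1 - p.2|
  · rw [if_pos h, Real.norm_eq_abs, abs_div, abs_mul]
    rw [div_le_iff₀ (lt_trans hε h)]
    have h1 : |p.1 * φ p.1| * |φ p.2| = ‖p.1 * φ p.1‖ * ‖φ p.2‖ := rfl
    calc |p.1 * φ p.1| * |φ p.2| = ε⁻¹ * (|p.1 * φ p.1| * |φ p.2|) * ε := by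
          field_simp
      _ ≤ ε⁻¹ * (‖p.1 * φ p.1‖ * ‖φ p.2‖) * |p.1 - p.2| := by
          rw [h1]
          have hnn : 0 ≤ ε⁻¹ * (‖p.1 * φ p.1‖ * ‖φ p.2‖) := by positivity
          exact mul_le_mul_of_nonneg_left (le_of_lt h) hnn |>.trans_eq' rfl
  · rw [if_neg h, norm_zero]
    positivity

lemma G_integrable (ε : ℝ) : Integrable (G φ ε) (volume.prod volume) := by
  have hb : Integrable (fun p : ℝ × ℝ => ‖φ p.1‖ * ‖φ p.2‖) (volume.prod volume) :=
    (φ.integrable (μ := volume)).norm.mul_prod (φ.integrable (μ := volume)).norm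
  have hm : Measurable (G φ ε) := by
    apply Measurable.ite (measurableSet_P ε) _ measurable_const
    exact (φ.continuous.measurable.comp measurable_fst).mul
      (φ.continuous.measurable.comp measurable_snd)
  refine hb.mono' hm.aestronglyMeasurable (ae_of_all _ fun p => ?_)
  rw [G]
  by_cases h : ε < |p.1 - p.2|
  · rw [if_pos h, Real.norm_eq_abs, abs_mul]
    exact le_of_eq (by simp [Real.norm_eq_abs])
  · rw [if_neg h, norm_zero]; positivity

lemma G'_integrable (ε : ℝ) : Integrable (G' φ ε) (volume.prod volume) := by
  have hb : Integrable (fun p : ℝ × ℝ => ‖φ p.1‖ * ‖φ p.2‖) (volume.prod volume) :=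
    (φ.integrable (μ := volume)).norm.mul_prod (φ.integrable (μ := volume)).norm
  have hm : Measurable (G' φ ε) := by
    apply Measurable.ite (measurableSet_P ε) measurable_const
    exact (φ.continuous.measurable.comp measurable_fst).mul
      (φ.continuous.measurable.comp measurable_snd)
  refine hb.mono' hm.aestronglyMeasurable (ae_of_all _ fun p => ?_)
  rw [G']
  by_cases h : ε < |p.1 - p.2|
  · rw [if_pos h, norm_zero]; positivity
  · rw [if_neg h, Real.norm_eq_abs, abs_mul]
    exact le_of_eq (by simp [Real.norm_eq_abs])

lemma inner_K {ε : ℝ} (x : ℝ) :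
    ∫ y, K φ ε (x, y) = x * φ x * T φ ε x := by
  have h1 : ∀ y : ℝ, K φ ε (x, y)
      = {y : ℝ | ε < |x - y|}.indicator (fun y => x * φ x * (φ y / (x - y))) y := by
    intro y
    by_cases h : ε < |x - y|
    · simp only [K, Set.indicator, Set.mem_setOf_eq, if_pos h]
      ring
    · simp only [K, Set.indicator, Set.mem_setOf_eq, if_neg h]
  rw [integral_congr_ae (ae_of_all _ h1), integral_indicator (measurableSet_S' ε x),
    MeasureTheory.integral_const_mul, T]

lemma fubini_J {ε : ℝ} (hε : 0 < ε) :
    ∫ x : ℝ, x * φ x * T φ ε x = ∫ p, K φ ε p ∂(volume.prod volume) := by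
  have h := integral_integral (f := fun x y => K φ ε (x, y)) (μ := volume) (ν := volume)
    (by exact K_integrable φ hε)
  have h2 : ∫ x : ℝ, x * φ x * T φ ε x = ∫ x : ℝ, ∫ y, K φ ε (x, y) :=
    integral_congr_ae (ae_of_all _ fun x => (inner_K φ x).symm)
  rw [h2]
  simpa using h

lemma two_K {ε : ℝ} (hε : 0 < ε) :
    2 * ∫ p, K φ ε p ∂(volume.prod volume) = ∫ p, G φ ε p ∂(volume.prod volume) := by
  have hswap : ∫ p, K φ ε p.swap ∂(volume.prod volume)
      = ∫ p, K φ ε p ∂(volume.prod volume) := integral_prod_swap (K φ ε)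
  have hKs : Integrable (fun p : ℝ × ℝ => K φ ε p.swap) (volume.prod volume) :=
    (K_integrable φ hε).swap
  have hpt : ∀ p : ℝ × ℝ, K φ ε p + K φ ε p.swap = G φ ε p := by
    rintro ⟨x, y⟩
    simp only [K, G, Prod.swap]
    by_cases h : ε < |x - y|
    · have h' : ε < |y - x| := by rwa [abs_sub_comm]
      rw [if_pos h, if_pos h', if_pos h]
      have hxy : x - y ≠ 0 := by
        intro h0
        rw [h0] at h
        simp at h
        linarith
      rw [show y - x = -(x - y) by ring, div_neg, ← sub_eq_add_neg, div_sub_div_same,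
        show x * φ x * φ y - y * φ y * φ x = (x - y) * (φ x * φ y) by ring,
        mul_div_cancel_left₀ _ hxy]
    · have h' : ¬ ε < |y - x| := by rwa [abs_sub_comm]
      rw [if_neg h, if_neg h', if_neg h]
      norm_num
  calc 2 * ∫ p, K φ ε p ∂(volume.prod volume)
      = (∫ p, K φ ε p ∂(volume.prod volume)) + ∫ p, K φ ε p.swap ∂(volume.prod volume) := by
        rw [hswap]; ring
    _ = ∫ p, (K φ ε p + K φ ε p.swap) ∂(volume.prod volume) :=
        (integral_add (K_integrable φ hε) hKs).symm
    _ = ∫ p, G φ ε p ∂(volume.prod volume) :=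
        integral_congr_ae (ae_of_all _ hpt)

lemma G_plus_G' (ε : ℝ) :
    (∫ p, G φ ε p ∂(volume.prod volume)) + (∫ p, G' φ ε p ∂(volume.prod volume))
      = (∫ x, φ x) * ∫ x, φ x := by
  rw [← integral_add (G_integrable φ ε) (G'_integrable φ ε)]
  have hpt : ∀ p : ℝ × ℝ, G φ ε p + G' φ ε p = φ p.1 * φ p.2 := by
    intro p
    simp only [G, G']
    by_cases h : ε < |p.1 - p.2| <;> simp [h]
  rw [integral_congr_ae (ae_of_all _ hpt)]
  exact integral_prod_mul (fun x => φ x) (fun y => φ y)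

def M0 (φ : SchwartzMap ℝ ℝ) : ℝ := SchwartzMap.seminorm ℝ 0 0 φ

lemma M0_nonneg : 0 ≤ M0 φ := apply_nonneg _ _

lemma inner_G' {ε : ℝ} (x : ℝ) :
    ∫ y, G' φ ε (x, y) = φ x * ∫ y in Icc (x - ε) (x + ε), φ y := by
  have hset : {y : ℝ | ¬ ε < |x - y|} = Icc (x - ε) (x + ε) := by
    ext y
    simp only [Set.mem_setOf_eq, not_lt, Set.mem_Icc, abs_le]
    constructor
    · rintro ⟨h1, h2⟩; constructor <;> linarith
    · rintro ⟨h1, h2⟩; constructor <;> linarith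
  have h1 : ∀ y : ℝ, G' φ ε (x, y)
      = Set.indicator (Icc (x - ε) (x + ε)) (fun y => φ x * φ y) y := by
    intro y
    rw [← hset]
    by_cases h : ε < |x - y|
    · simp only [G', if_pos h, Set.indicator, Set.mem_setOf_eq, h, not_true, if_neg,
        not_not]
      simp [h]
    · simp only [G', if_neg h, Set.indicator, Set.mem_setOf_eq, h, not_false_iff, if_pos]
      norm_num
  rw [integral_congr_ae (ae_of_all _ h1), integral_indicator measurableSet_Icc,
    MeasureTheory.integral_const_mul]

lemma abs_inner_G'_le {ε : ℝ} (hε : 0 < ε) (x : ℝ) :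
    |∫ y, G' φ ε (x, y)| ≤ ‖φ x‖ * (M0 φ * (2 * ε)) := by
  rw [inner_G', abs_mul]
  have hfin : volume (Icc (x - ε) (x + ε)) < ⊤ := by
    rw [Real.volume_Icc]; exact ENNReal.ofReal_lt_top
  have h := norm_setIntegral_le_of_norm_le_const (f := fun y => φ y) (C := M0 φ) hfin
    (fun y _ => SchwartzMap.norm_le_seminorm ℝ φ y)
  have hvol : (volume (Icc (x - ε) (x + ε))).toReal = 2 * ε := by
    rw [Real.volume_Icc, ENNReal.toReal_ofReal (by linarith)]
    ring
  rw [Real.norm_eq_abs, measureReal_def, hvol] at h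
  rw [Real.norm_eq_abs]
  exact mul_le_mul_of_nonneg_left h (abs_nonneg _)

lemma G'_bound {ε : ℝ} (hε : 0 < ε) :
    |∫ p, G' φ ε p ∂(volume.prod volume)| ≤ L1 φ * (M0 φ * (2 * ε)) := by
  have h := integral_integral (f := fun x y => G' φ ε (x, y)) (μ := volume) (ν := volume)
    (by exact G'_integrable φ ε)
  have h2 : ∫ p, G' φ ε p ∂(volume.prod volume) = ∫ x : ℝ, ∫ y, G' φ ε (x, y) := by
    rw [h]
  rw [h2]
  have hinner_int : Integrable (fun x : ℝ => ∫ y, G' φ ε (x, y)) :=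
    (G'_integrable φ ε).integral_prod_left
  have habs : |∫ x : ℝ, ∫ y, G' φ ε (x, y)| ≤ ∫ x : ℝ, |∫ y, G' φ ε (x, y)| := by
    simpa [Real.norm_eq_abs] using
      norm_integral_le_integral_norm (fun x : ℝ => ∫ y, G' φ ε (x, y))
  refine habs.trans ?_
  have hmono : ∫ x : ℝ, |∫ y, G' φ ε (x, y)| ≤ ∫ x : ℝ, ‖φ x‖ * (M0 φ * (2 * ε)) := by
    apply integral_mono hinner_int.abs ((φ.integrable (μ := volume)).norm.mul_const _)
    exact fun x => abs_inner_G'_le φ hε x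
  refine hmono.trans ?_
  rw [MeasureTheory.integral_mul_const]
  rfl

lemma T_aestronglyMeasurable (ε : ℝ) : AEStronglyMeasurable (fun x => T φ ε x) volume := by
  have hm : StronglyMeasurable (fun p : ℝ × ℝ =>
      Set.indicator {p : ℝ × ℝ | ε < |p.1 - p.2|} (fun p => φ p.2 / (p.1 - p.2)) p) := by
    apply Measurable.stronglyMeasurable
    apply Measurable.indicator _ (measurableSet_P ε)
    exact (φ.continuous.measurable.comp measurable_snd).div (measurable_fst.sub measurable_snd)
  have h := hm.integral_prod_right' (ν := volume)
  apply (h.aestronglyMeasurable).congr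
  refine ae_of_all _ fun x => ?_
  show _ = T φ ε x
  rw [show T φ ε x = ∫ y in {y : ℝ | ε < |x - y|}, φ y / (x - y) from rfl,
    ← integral_indicator (measurableSet_S' ε x)]
  apply integral_congr_ae (ae_of_all _ fun y => ?_)
  by_cases hy : ε < |x - y| <;> simp [Set.indicator, hy]

lemma J_bound {ε : ℝ} (hε : 0 < ε) (hphi0 : ∫ x, φ x = 0) :
    |∫ x : ℝ, x * φ x * T φ ε x| ≤ L1 φ * M0 φ * ε := by
  rw [fubini_J φ hε]
  have h2 := two_K φ hε
  have h3 := G_plus_G' φ ε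
  rw [hphi0, zero_mul] at h3
  have hK : ∫ p, K φ ε p ∂(volume.prod volume)
      = -(∫ p, G' φ ε p ∂(volume.prod volume)) / 2 := by linarith
  rw [hK]
  rw [abs_div, abs_neg]
  have := G'_bound φ hε
  rw [div_le_iff₀ (by norm_num : (0:ℝ) < |(2:ℝ)|)]
  refine this.trans (le_of_eq ?_)
  rw [show |(2:ℝ)| = 2 by norm_num]
  ring

end HilbertAux
end

/-- `HilbertAt f x L` means the principal-value Hilbert transform
`(1/π) P.V. ∫ f(y)/(x-y) dy` exists at `x` and equals `L`. -/
def HilbertAt (f : ℝ → ℝ) (x L : ℝ) : Prop :=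
  Filter.Tendsto
    (fun ε : ℝ => (1 / Real.pi) * ∫ y in {y : ℝ | ε < |x - y|}, f y / (x - y))
    (nhdsWithin 0 (Set.Ioi 0)) (nhds L)

open HilbertAux

/-- For a Schwartz function `ω` with `u_xx = H(ω')`, the integrand
`u_xx(x)·ω'(x)·x` is integrable and `∫ u_xx ω' x dx = 0`. -/
theorem integral_uxx_omegax_x (ω : SchwartzMap ℝ ℝ) (uxx : ℝ → ℝ)
    (hH : ∀ x : ℝ, HilbertAt (deriv (fun y => ω y)) x (uxx x)) :
    Integrable (fun x : ℝ => uxx x * deriv (fun y => ω y) x * x) ∧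
    ∫ x : ℝ, uxx x * deriv (fun y => ω y) x * x = 0 := by
  set φ : SchwartzMap ℝ ℝ := SchwartzMap.derivCLM ℝ ℝ ω with hφ
  have hφd : deriv (fun y => ω y) = ⇑φ := by
    funext x
    rw [hφ, SchwartzMap.derivCLM_apply]
  rw [hφd]
  -- integral of φ is zero
  have hphi0 : ∫ x, φ x = 0 := by
    have h := zero_at_infty ω
    rw [cocompact_eq_atBot_atTop] at h
    have hd : ∀ x : ℝ, HasDerivAt ω (φ x) x := by
      intro x
      have := ω.differentiableAt (x := x) |>.hasDerivAt
      rwa [show deriv ω x = φ x from (SchwartzMap.derivCLM_apply ℝ ω x).symm] at this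
    have := integral_of_hasDerivAt_of_tendsto hd (φ.integrable (μ := volume))
      (h.mono_left le_sup_left) (h.mono_left le_sup_right)
    simpa using this
  have hπ : (0:ℝ) < π := Real.pi_pos
  -- sequence of truncations
  set εs : ℕ → ℝ := fun n => 1 / (n + 1) with hεs
  have hεpos : ∀ n, 0 < εs n := fun n => by positivity
  have hseq : Tendsto εs atTop (nhdsWithin 0 (Set.Ioi 0)) := by
    rw [tendsto_nhdsWithin_iff]
    exact ⟨tendsto_one_div_add_atTop_nhds_zero_nat,
      Eventually.of_forall fun n => Set.mem_Ioi.2 (hεpos n)⟩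
  -- rephrase hypothesis
  have hH' : ∀ x : ℝ, Tendsto (fun n => (1 / π) * T φ (εs n) x) atTop (𝓝 (uxx x)) := by
    intro x
    have h := hH x
    rw [HilbertAt, hφd] at h
    exact h.comp hseq
  set F : ℕ → ℝ → ℝ := fun n x => ((1 / π) * T φ (εs n) x) * (φ x * x) with hF
  set bound : ℝ → ℝ := fun x => ((2 * M φ + L1 φ) / π) * (‖φ x‖ * ‖x‖) with hbound_def
  have hFmeas : ∀ n, AEStronglyMeasurable (F n) volume := by
    intro n
    exact (((T_aestronglyMeasurable φ (εs n)).const_mul _).mul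
      ((φ.continuous.measurable.mul measurable_id).aestronglyMeasurable))
  have hbi : Integrable bound := by
    have h1 := (φ.integrable_pow_mul volume 1).const_mul ((2 * M φ + L1 φ) / π)
    apply h1.congr (ae_of_all _ fun x => ?_)
    rw [hbound_def]
    simp only [pow_one]
    ring
  have hFle : ∀ n, ∀ x, ‖F n x‖ ≤ bound x := by
    intro n x
    rw [hF, hbound_def]
    simp only [norm_mul, Real.norm_eq_abs, abs_mul, abs_div]
    rw [abs_of_pos hπ, show |(1:ℝ)| = 1 by norm_num]
    have hT := T_bound φ (hεpos n) x
    calc 1 / π * |T φ (εs n) x| * (|φ x| * |x|)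
        ≤ 1 / π * (2 * M φ + L1 φ) * (|φ x| * |x|) := by
          apply mul_le_mul_of_nonneg_right _ (by positivity)
          apply mul_le_mul_of_nonneg_left hT (by positivity)
      _ = (2 * M φ + L1 φ) / π * (|φ x| * |x|) := by ring
  have hlim : ∀ x : ℝ, Tendsto (fun n => F n x) atTop (𝓝 (uxx x * (φ x * x))) :=
    fun x => (hH' x).mul_const _
  -- dominated convergence
  have hDCT := tendsto_integral_of_dominated_convergence bound hFmeas hbi
    (fun n => ae_of_all _ (hFle n)) (ae_of_all _ hlim)
  -- compute the integrals of F n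
  have hFn_int : ∀ n, ∫ x, F n x = (1 / π) * ∫ x : ℝ, x * φ x * T φ (εs n) x := by
    intro n
    rw [← MeasureTheory.integral_const_mul]
    apply integral_congr_ae (ae_of_all _ fun x => ?_)
    rw [hF]
    ring
  have hto0 : Tendsto (fun n => ∫ x, F n x) atTop (𝓝 0) := by
    apply squeeze_zero_norm _ _
    · exact fun n => (1 / π) * (L1 φ * M0 φ * εs n)
    · intro n
      rw [hFn_int n, norm_mul, Real.norm_eq_abs, Real.norm_eq_abs, abs_div,
        abs_of_pos hπ, show |(1:ℝ)| = 1 by norm_num]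
      exact mul_le_mul_of_nonneg_left (J_bound φ (hεpos n) hphi0) (by positivity)
    · have : Tendsto (fun n : ℕ => εs n) atTop (𝓝 0) := tendsto_one_div_add_atTop_nhds_zero_nat
      have h2 := this.const_mul ((1 / π) * (L1 φ * M0 φ))
      simpa [mul_assoc, mul_comm, mul_left_comm] using h2
  have hval : ∫ x, uxx x * (φ x * x) = 0 := tendsto_nhds_unique hDCT hto0
  -- integrability of the limit
  have hlim_meas : AEStronglyMeasurable (fun x => uxx x * (φ x * x)) volume :=
    aestronglyMeasurable_of_tendsto_ae atTop hFmeas (ae_of_all _ hlim)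
  have hlim_int : Integrable (fun x => uxx x * (φ x * x)) := by
    apply hbi.mono' hlim_meas (ae_of_all _ fun x => ?_)
    have h1 : Tendsto (fun n => ‖F n x‖) atTop (𝓝 ‖uxx x * (φ x * x)‖) := (hlim x).norm
    exact le_of_tendsto h1 (Eventually.of_forall fun n => hFle n x)
  constructor
  · apply hlim_int.congr (ae_of_all _ fun x => ?_)
    ring
  · rw [← hval]
    apply integral_congr_ae (ae_of_all _ fun x => ?_)
    ring
end

section
/- (Weighted Hardy inequality) Let p ∈ {2, 4} and let g: ℝ → ℝ be a smooth compactly supported function such that g(0) = g'(0) = 0, and additionally g''(0) = 0 in the case p = 4. Then ∫_ℝ g(x)²/|x|^{p+2} dx ≤ (2/(p+1))² · ∫_ℝ g'(x)²/|x|^p dx, where both integrals are finite. -/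
open MeasureTheory Real Set Filter Topology ContDiff

private lemma am_gm_aux {ε : ℝ} (a b : ℝ) (hε : 0 < ε) :
    2 * (a * b) ≤ ε * a ^ 2 + (1 / ε) * b ^ 2 := by
  have key : ε * a ^ 2 + (1 / ε) * b ^ 2 - 2 * (a * b) = (1 / ε) * (ε * a - b) ^ 2 := by
    field_simp
    ring
  have h2 : (0:ℝ) ≤ (1 / ε) * (ε * a - b) ^ 2 :=
    mul_nonneg (by positivity) (sq_nonneg _)
  linarith

private lemma mvt_step {f : ℝ → ℝ} (hf : Differentiable ℝ f) (h0 : f 0 = 0)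
    {C : ℝ} (hC : 0 ≤ C) {n : ℕ} (hd : ∀ t, |deriv f t| ≤ C * |t| ^ n) (x : ℝ) :
    |f x| ≤ C * |x| ^ (n + 1) := by
  have habs : ∀ t ∈ uIcc (0:ℝ) x, |t| ≤ |x| := by
    intro t ht
    rw [Set.mem_uIcc] at ht
    rcases ht with ⟨ht1, ht2⟩ | ⟨ht1, ht2⟩
    · exact abs_le.2 ⟨by linarith [abs_nonneg x], ht2.trans (le_abs_self x)⟩
    · exact abs_le.2 ⟨(neg_abs_le x).trans ht1, by linarith [abs_nonneg x]⟩
  have key := Convex.norm_image_sub_le_of_norm_deriv_le (f := f) (s := uIcc (0:ℝ) x)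
    (C := C * |x| ^ n)
    (fun t _ => hf t) (fun t ht => by
      rw [Real.norm_eq_abs]
      exact (hd t).trans
        (mul_le_mul_of_nonneg_left (pow_le_pow_left₀ (abs_nonneg t) (habs t ht) n) hC))
    (convex_uIcc 0 x) left_mem_uIcc right_mem_uIcc
  rw [h0, sub_zero, sub_zero, Real.norm_eq_abs, Real.norm_eq_abs] at key
  calc |f x| ≤ C * |x| ^ n * |x| := key
    _ = C * |x| ^ (n + 1) := by rw [pow_succ]; ring

private lemma integrable_aux {f : ℝ → ℝ} (hfm : AEStronglyMeasurable f volume)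
    {K : Set ℝ} (hK : IsCompact K) (hKm : MeasurableSet K) {C : ℝ} (hC : 0 ≤ C)
    (hb : ∀ x, |f x| ≤ C) (hz : ∀ x ∉ K, f x = 0) : Integrable f := by
  have hind : Integrable (K.indicator fun _ => C) volume :=
    (integrable_indicator_iff hKm).mpr ((integrableOn_const_iff (C := C)).mpr (Or.inr hK.measure_lt_top))
  refine hind.mono' hfm (Filter.Eventually.of_forall fun x => ?_)
  by_cases hx : x ∈ K
  · simpa [Set.indicator_of_mem hx, Real.norm_eq_abs] using hb x
  · simp [Set.indicator_of_notMem hx, hz x hx, Real.norm_eq_abs, hC]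

private lemma abs_div_pow_le {a x C : ℝ} {m : ℕ} (hC : 0 ≤ C) (h : |a| ≤ C * |x| ^ m) :
    |a / x ^ m| ≤ C := by
  rcases eq_or_ne x 0 with rfl | hx
  · rcases Nat.eq_zero_or_pos m with rfl | hm
    · simpa using h
    · simp [zero_pow hm.ne', hC]
  · rw [abs_div, abs_pow, div_le_iff₀ (pow_pos (abs_pos.2 hx) m)]
    exact h

private lemma integrable_sq_div {f : ℝ → ℝ} (hfc : Continuous f) (hs : HasCompactSupport f)
    {M : ℝ} {k : ℕ} (hM : 0 ≤ M) (hbf : ∀ x, |f x| ≤ M * |x| ^ k) :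
    Integrable (fun x : ℝ => f x ^ 2 / x ^ (2 * k)) := by
  have hsq : ∀ x : ℝ, |f x ^ 2| ≤ M ^ 2 * |x| ^ (2 * k) := fun x => by
    calc |f x ^ 2| = |f x| ^ 2 := abs_pow _ _
      _ ≤ (M * |x| ^ k) ^ 2 := pow_le_pow_left₀ (abs_nonneg _) (hbf x) 2
      _ = M ^ 2 * |x| ^ (2 * k) := by
          rw [mul_pow, ← pow_mul, show k * 2 = 2 * k from by ring]
  refine integrable_aux
    (((hfc.pow 2).measurable.div ((continuous_pow _).measurable)).aestronglyMeasurable)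
    hs (isClosed_tsupport f).measurableSet (by positivity : (0:ℝ) ≤ M ^ 2)
    (fun x => abs_div_pow_le (by positivity) (hsq x))
    (fun x hx => by rw [image_eq_zero_of_notMem_tsupport hx]; simp)

private lemma hardy_Ioi (n : ℕ) (g : ℝ → ℝ) (hg : ContDiff ℝ (⊤ : ℕ∞) g)
    (hsupp : HasCompactSupport g) {M : ℝ} (hM : 0 ≤ M)
    (hb : ∀ x, |g x| ≤ M * |x| ^ (n + 1)) (hb' : ∀ x, |deriv g x| ≤ M * |x| ^ n)
    (int1 : Integrable (fun x : ℝ => g x ^ 2 / x ^ (2 * n + 2)))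
    (int2 : Integrable (fun x : ℝ => deriv g x ^ 2 / x ^ (2 * n))) :
    ∫ x in Ioi (0:ℝ), g x ^ 2 / x ^ (2 * n + 2) ≤
      (2 / (2 * (n:ℝ) + 1)) ^ 2 * ∫ x in Ioi (0:ℝ), deriv g x ^ 2 / x ^ (2 * n) := by
  have hgd : Differentiable ℝ g := hg.differentiable (by simp)
  have hgc : Continuous g := hgd.continuous
  have hg'c : Continuous (deriv g) := hg.continuous_deriv (by simp)
  -- bound for the mixed term
  have gg' : ∀ x : ℝ, |2 * g x * deriv g x| ≤ 2 * M ^ 2 * |x| ^ (2 * n + 1) := fun x => by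
    have h := mul_le_mul (hb x) (hb' x) (abs_nonneg _) (by positivity)
    calc |2 * g x * deriv g x| = 2 * (|g x| * |deriv g x|) := by
          rw [abs_mul, abs_mul]; norm_num; ring
      _ ≤ 2 * (M * |x| ^ (n + 1) * (M * |x| ^ n)) := by linarith
      _ = 2 * M ^ 2 * |x| ^ (2 * n + 1) := by
          rw [show 2 * n + 1 = (n + 1) + n from by ring, pow_add]; ring
  have int3 : Integrable (fun x : ℝ => 2 * g x * deriv g x / x ^ (2 * n + 1)) := by
    refine integrable_aux
      ((((continuous_const.mul hgc).mul hg'c).measurable.div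
        ((continuous_pow _).measurable)).aestronglyMeasurable)
      hsupp (isClosed_tsupport g).measurableSet (by positivity : (0:ℝ) ≤ 2 * M ^ 2)
      (fun x => abs_div_pow_le (by positivity) (gg' x))
      (fun x hx => by rw [image_eq_zero_of_notMem_tsupport hx]; simp)
  -- the squared bound for g
  have gsq : ∀ x : ℝ, |g x ^ 2| ≤ M ^ 2 * |x| ^ (2 * n + 2) := fun x => by
    calc |g x ^ 2| = |g x| ^ 2 := abs_pow _ _
      _ ≤ (M * |x| ^ (n + 1)) ^ 2 := pow_le_pow_left₀ (abs_nonneg _) (hb x) 2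
      _ = M ^ 2 * |x| ^ (2 * n + 2) := by
          rw [mul_pow, ← pow_mul, show (n + 1) * 2 = 2 * n + 2 from by ring]
  -- the function F and its derivative
  set F : ℝ → ℝ := fun x => g x ^ 2 / x ^ (2 * n + 1) with hF
  set φ : ℝ → ℝ := fun x => 2 * g x * deriv g x / x ^ (2 * n + 1) -
      (2 * (n:ℝ) + 1) * (g x ^ 2 / x ^ (2 * n + 2)) with hφ
  have hF0 : F 0 = 0 := by simp [hF]
  have hderivAll : ∀ x ∈ Ioi (0:ℝ), HasDerivAt F (φ x) x := by
    intro x hx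
    have hx0 : x ≠ 0 := ne_of_gt hx
    have hu : HasDerivAt (fun y : ℝ => g y ^ 2) (2 * g x * deriv g x) x := by
      have := ((hgd x).hasDerivAt).pow 2
      exact this.congr_deriv (by norm_num)
    have hv : HasDerivAt (fun y : ℝ => y ^ (2 * n + 1)) ((2 * (n:ℝ) + 1) * x ^ (2 * n)) x := by
      have := hasDerivAt_pow (2 * n + 1) x
      exact this.congr_deriv (by push_cast [Nat.add_sub_cancel]; ring)
    have hvne : x ^ (2 * n + 1) ≠ 0 := pow_ne_zero _ hx0
    have hd := hu.div hv hvne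
    refine (show HasDerivAt F _ x from hd).congr_deriv ?_
    rw [hφ]
    field_simp
    ring
  have hcont : ContinuousWithinAt F (Ici (0:ℝ)) 0 := by
    rw [ContinuousWithinAt, hF0]
    have hbnd : ∀ x ∈ Ici (0:ℝ), ‖F x‖ ≤ M ^ 2 * x := by
      intro x hx
      rcases (mem_Ici.mp hx).eq_or_lt with rfl | hx0
      · simp [hF0]
      · have h1 := gsq x
        rw [abs_of_nonneg (sq_nonneg (g x)), abs_of_pos hx0] at h1
        rw [hF, Real.norm_eq_abs,
          abs_of_nonneg (div_nonneg (sq_nonneg _) (pow_nonneg hx0.le _)),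
          div_le_iff₀ (pow_pos hx0 _)]
        calc g x ^ 2 ≤ M ^ 2 * x ^ (2 * n + 2) := h1
          _ = M ^ 2 * x * x ^ (2 * n + 1) := by rw [pow_succ]; ring
    refine squeeze_zero_norm' (eventually_mem_nhdsWithin.mono hbnd) ?_
    have h2 : Tendsto (fun x : ℝ => M ^ 2 * x) (𝓝 0) (𝓝 (M ^ 2 * 0)) :=
      (continuous_const.mul continuous_id).tendsto 0
    simpa using h2.mono_left nhdsWithin_le_nhds
  obtain ⟨R, hR⟩ := hsupp.isBounded.subset_closedBall 0
  have htop : Tendsto F atTop (𝓝 0) := by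
    have hev : ∀ᶠ x in atTop, F x = 0 := by
      filter_upwards [eventually_gt_atTop R] with x hx
      have hxg : g x = 0 := by
        by_contra hne
        have hmem := hR (subset_tsupport g (Function.mem_support.mpr hne))
        rw [Metric.mem_closedBall, Real.dist_eq, sub_zero] at hmem
        have : x ≤ R := le_trans (le_abs_self x) hmem
        linarith
      simp [hF, hxg]
    exact Tendsto.congr' (by filter_upwards [hev] with x hx using hx.symm) tendsto_const_nhds
  have hφint : IntegrableOn φ (Ioi (0:ℝ)) :=
    ((int3.sub (int1.const_mul (2 * (n:ℝ) + 1)))).integrableOn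
  have hkey : ∫ x in Ioi (0:ℝ), φ x = 0 - F 0 :=
    integral_Ioi_of_hasDerivAt_of_tendsto hcont hderivAll hφint htop
  rw [hF0, sub_zero] at hkey
  have hsplit : ∫ x in Ioi (0:ℝ), φ x =
      (∫ x in Ioi (0:ℝ), 2 * g x * deriv g x / x ^ (2 * n + 1)) -
      (2 * (n:ℝ) + 1) * ∫ x in Ioi (0:ℝ), g x ^ 2 / x ^ (2 * n + 2) := by
    rw [hφ]
    rw [integral_sub int3.integrableOn ((int1.const_mul (2 * (n:ℝ) + 1)).integrableOn),
      integral_const_mul _ _]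
  have hpt : ∀ x ∈ Ioi (0:ℝ), 2 * g x * deriv g x / x ^ (2 * n + 1) ≤
      ((2 * (n:ℝ) + 1) / 2) * (g x ^ 2 / x ^ (2 * n + 2)) +
      (2 / (2 * (n:ℝ) + 1)) * (deriv g x ^ 2 / x ^ (2 * n)) := by
    intro x _
    have hP : (0:ℝ) < (2 * (n:ℝ) + 1) / 2 := by positivity
    have h := am_gm_aux (g x / x ^ (n + 1)) (deriv g x / x ^ n) hP
    have e1 : g x / x ^ (n + 1) * (deriv g x / x ^ n) = g x * deriv g x / x ^ (2 * n + 1) := by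
      rw [div_mul_div_comm, ← pow_add, show n + 1 + n = 2 * n + 1 from by ring]
    have e2 : (g x / x ^ (n + 1)) ^ 2 = g x ^ 2 / x ^ (2 * n + 2) := by
      rw [div_pow, ← pow_mul, show (n + 1) * 2 = 2 * n + 2 from by ring]
    have e3 : (deriv g x / x ^ n) ^ 2 = deriv g x ^ 2 / x ^ (2 * n) := by
      rw [div_pow, ← pow_mul, show n * 2 = 2 * n from by ring]
    rw [e1, e2, e3, one_div_div] at h
    have e0 : 2 * g x * deriv g x / x ^ (2 * n + 1) =
        2 * (g x * deriv g x / x ^ (2 * n + 1)) := by ring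
    rw [e0]
    exact h
  have hmono : ∫ x in Ioi (0:ℝ), 2 * g x * deriv g x / x ^ (2 * n + 1) ≤
      ∫ x in Ioi (0:ℝ), (((2 * (n:ℝ) + 1) / 2) * (g x ^ 2 / x ^ (2 * n + 2)) +
        (2 / (2 * (n:ℝ) + 1)) * (deriv g x ^ 2 / x ^ (2 * n))) :=
    setIntegral_mono_on int3.integrableOn
      (((int1.const_mul _).add (int2.const_mul _)).integrableOn) measurableSet_Ioi hpt
  rw [integral_add ((int1.const_mul _).integrableOn) ((int2.const_mul _).integrableOn),
    integral_const_mul _ _, integral_const_mul _ _] at hmono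
  set A : ℝ := ∫ x in Ioi (0:ℝ), g x ^ 2 / x ^ (2 * n + 2) with hA
  set B : ℝ := ∫ x in Ioi (0:ℝ), deriv g x ^ 2 / x ^ (2 * n) with hB
  have hPpos : (0:ℝ) < 2 * (n:ℝ) + 1 := by positivity
  have hstep : ((2 * (n:ℝ) + 1) / 2) * A ≤ (2 / (2 * (n:ℝ) + 1)) * B := by linarith
  have hmul := mul_le_mul_of_nonneg_left hstep
    (le_of_lt (by positivity : (0:ℝ) < 2 / (2 * (n:ℝ) + 1)))
  calc A = (2 / (2 * (n:ℝ) + 1)) * (((2 * (n:ℝ) + 1) / 2) * A) := by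
        rw [show (2 / (2 * (n:ℝ) + 1)) * (((2 * (n:ℝ) + 1) / 2) * A) =
          ((2 * (n:ℝ) + 1) / (2 * (n:ℝ) + 1)) * A from by ring, div_self hPpos.ne', one_mul]
    _ ≤ (2 / (2 * (n:ℝ) + 1)) * ((2 / (2 * (n:ℝ) + 1)) * B) := hmul
    _ = (2 / (2 * (n:ℝ) + 1)) ^ 2 * B := by ring

private lemma hardy_main (n : ℕ) (g : ℝ → ℝ) (hg : ContDiff ℝ (⊤ : ℕ∞) g)
    (hsupp : HasCompactSupport g) {M : ℝ} (hM : 0 ≤ M)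
    (hb : ∀ x, |g x| ≤ M * |x| ^ (n + 1)) (hb' : ∀ x, |deriv g x| ≤ M * |x| ^ n) :
    Integrable (fun x : ℝ => g x ^ 2 / |x| ^ (2 * n + 2)) ∧
    Integrable (fun x : ℝ => deriv g x ^ 2 / |x| ^ (2 * n)) ∧
    ∫ x : ℝ, g x ^ 2 / |x| ^ (2 * n + 2) ≤
      (2 / (2 * (n:ℝ) + 1)) ^ 2 * ∫ x : ℝ, deriv g x ^ 2 / |x| ^ (2 * n) := by
  have hgd : Differentiable ℝ g := hg.differentiable (by simp)
  have hgc : Continuous g := hgd.continuous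
  have hg'c : Continuous (deriv g) := hg.continuous_deriv (by simp)
  have heq1 : (fun x : ℝ => g x ^ 2 / |x| ^ (2 * n + 2)) =
      fun x : ℝ => g x ^ 2 / x ^ (2 * n + 2) := by
    funext x; rw [Even.pow_abs ⟨n + 1, by ring⟩]
  have heq2 : (fun x : ℝ => deriv g x ^ 2 / |x| ^ (2 * n)) =
      fun x : ℝ => deriv g x ^ 2 / x ^ (2 * n) := by
    funext x; rw [Even.pow_abs ⟨n, by ring⟩]
  have int1 : Integrable (fun x : ℝ => g x ^ 2 / x ^ (2 * n + 2)) := by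
    have := integrable_sq_div (k := n + 1) hgc hsupp hM hb
    simpa [show 2 * (n + 1) = 2 * n + 2 from by ring] using this
  have int2 : Integrable (fun x : ℝ => deriv g x ^ 2 / x ^ (2 * n)) :=
    integrable_sq_div (k := n) hg'c hsupp.deriv hM hb'
  -- the reflected function
  set h : ℝ → ℝ := fun x => g (-x) with hh
  have hgh : ContDiff ℝ (⊤ : ℕ∞) h := hg.comp contDiff_neg
  have hsupph : HasCompactSupport h := hsupp.comp_homeomorph (Homeomorph.neg ℝ)
  have hdh : ∀ x, deriv h x = -deriv g (-x) := fun x => by rw [hh]; exact deriv_comp_neg g x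
  have hbh : ∀ x, |h x| ≤ M * |x| ^ (n + 1) := fun x => by
    simpa [hh, abs_neg] using hb (-x)
  have hbh' : ∀ x, |deriv h x| ≤ M * |x| ^ n := fun x => by
    rw [hdh x, abs_neg]
    simpa [abs_neg] using hb' (-x)
  have hhc : Continuous h := (hgh.differentiable (by simp)).continuous
  have hh'c : Continuous (deriv h) := hgh.continuous_deriv (by simp)
  have int1h : Integrable (fun x : ℝ => h x ^ 2 / x ^ (2 * n + 2)) := by
    have := integrable_sq_div (k := n + 1) hhc hsupph hM hbh
    simpa [show 2 * (n + 1) = 2 * n + 2 from by ring] using this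
  have int2h : Integrable (fun x : ℝ => deriv h x ^ 2 / x ^ (2 * n)) :=
    integrable_sq_div (k := n) hh'c hsupph.deriv hM hbh'
  have hIoi_g := hardy_Ioi n g hg hsupp hM hb hb' int1 int2
  have hIoi_h := hardy_Ioi n h hgh hsupph hM hbh hbh' int1h int2h
  -- change of variables
  have c1 : ∫ x in Ioi (0:ℝ), h x ^ 2 / x ^ (2 * n + 2) =
      ∫ x in Iic (0:ℝ), g x ^ 2 / x ^ (2 * n + 2) := by
    rw [show (Iic (0:ℝ)) = Iic (-(0:ℝ)) from by rw [neg_zero],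
      ← integral_comp_neg_Ioi]
    refine setIntegral_congr_fun measurableSet_Ioi (fun x _ => ?_)
    simp only [hh]
    rw [Even.neg_pow (⟨n + 1, by ring⟩ : Even (2 * n + 2))]
  have c2 : ∫ x in Ioi (0:ℝ), deriv h x ^ 2 / x ^ (2 * n) =
      ∫ x in Iic (0:ℝ), deriv g x ^ 2 / x ^ (2 * n) := by
    rw [show (Iic (0:ℝ)) = Iic (-(0:ℝ)) from by rw [neg_zero],
      ← integral_comp_neg_Ioi]
    refine setIntegral_congr_fun measurableSet_Ioi (fun x _ => ?_)
    rw [hdh x, neg_sq, Even.neg_pow (⟨n, by ring⟩ : Even (2 * n))]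
  have hneg : (∫ x in Iic (0:ℝ), g x ^ 2 / x ^ (2 * n + 2)) ≤
      (2 / (2 * (n:ℝ) + 1)) ^ 2 * ∫ x in Iic (0:ℝ), deriv g x ^ 2 / x ^ (2 * n) := by
    rw [← c1, ← c2]; exact hIoi_h
  refine ⟨by rw [heq1]; exact int1, by rw [heq2]; exact int2, ?_⟩
  rw [heq1, heq2]
  calc ∫ x : ℝ, g x ^ 2 / x ^ (2 * n + 2)
      = (∫ x in Iic (0:ℝ), g x ^ 2 / x ^ (2 * n + 2)) +
        ∫ x in Ioi (0:ℝ), g x ^ 2 / x ^ (2 * n + 2) :=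
        (intervalIntegral.integral_Iic_add_Ioi int1.integrableOn int1.integrableOn).symm
    _ ≤ (2 / (2 * (n:ℝ) + 1)) ^ 2 * (∫ x in Iic (0:ℝ), deriv g x ^ 2 / x ^ (2 * n)) +
        (2 / (2 * (n:ℝ) + 1)) ^ 2 * ∫ x in Ioi (0:ℝ), deriv g x ^ 2 / x ^ (2 * n) :=
        add_le_add hneg hIoi_g
    _ = (2 / (2 * (n:ℝ) + 1)) ^ 2 * ∫ x : ℝ, deriv g x ^ 2 / x ^ (2 * n) := by
        rw [← mul_add, intervalIntegral.integral_Iic_add_Ioi int2.integrableOn int2.integrableOn]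

private lemma hardy_bounds1 (g : ℝ → ℝ) (hg : ContDiff ℝ (⊤ : ℕ∞) g) (hsupp : HasCompactSupport g)
    (h0 : g 0 = 0) (h1 : deriv g 0 = 0) :
    ∃ M : ℝ, 0 ≤ M ∧ (∀ x, |g x| ≤ M * |x| ^ 2) ∧ (∀ x, |deriv g x| ≤ M * |x| ^ 1) := by
  have hg1 : ContDiff ℝ ∞ g := hg.of_le (by simp)
  have hgd : Differentiable ℝ g := hg.differentiable (by simp)
  have hg2 : ContDiff ℝ ∞ (deriv g) := (contDiff_infty_iff_deriv.mp hg1).2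
  have hg'd : Differentiable ℝ (deriv g) := (contDiff_infty_iff_deriv.mp hg2).1
  have hg''c : Continuous (deriv (deriv g)) := (contDiff_infty_iff_deriv.mp hg2).2.continuous
  obtain ⟨C, hC⟩ := (hsupp.deriv.deriv).exists_bound_of_continuous hg''c
  refine ⟨max C 0, le_max_right _ _, ?_, ?_⟩
  · exact fun x => mvt_step hgd h0 (le_max_right _ _)
      (mvt_step hg'd h1 (le_max_right _ _)
        (fun t => by rw [pow_zero, mul_one]; exact le_trans (le_trans (Real.norm_eq_abs _ ▸ le_refl _) (hC t)) (le_max_left _ _))) x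
  · exact fun x => mvt_step hg'd h1 (le_max_right _ _)
      (fun t => by rw [pow_zero, mul_one]; exact le_trans (le_trans (Real.norm_eq_abs _ ▸ le_refl _) (hC t)) (le_max_left _ _)) x

private lemma hardy_bounds2 (g : ℝ → ℝ) (hg : ContDiff ℝ (⊤ : ℕ∞) g) (hsupp : HasCompactSupport g)
    (h0 : g 0 = 0) (h1 : deriv g 0 = 0) (h2 : deriv (deriv g) 0 = 0) :
    ∃ M : ℝ, 0 ≤ M ∧ (∀ x, |g x| ≤ M * |x| ^ 3) ∧ (∀ x, |deriv g x| ≤ M * |x| ^ 2) := by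
  have hg1 : ContDiff ℝ ∞ g := hg.of_le (by simp)
  have hgd : Differentiable ℝ g := hg.differentiable (by simp)
  have hg2 : ContDiff ℝ ∞ (deriv g) := (contDiff_infty_iff_deriv.mp hg1).2
  have hg'd : Differentiable ℝ (deriv g) := (contDiff_infty_iff_deriv.mp hg2).1
  have hg3 : ContDiff ℝ ∞ (deriv (deriv g)) := (contDiff_infty_iff_deriv.mp hg2).2
  have hg''d : Differentiable ℝ (deriv (deriv g)) := (contDiff_infty_iff_deriv.mp hg3).1
  have hg'''c : Continuous (deriv (deriv (deriv g))) := (contDiff_infty_iff_deriv.mp hg3).2.continuous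
  obtain ⟨C, hC⟩ := (hsupp.deriv.deriv.deriv).exists_bound_of_continuous hg'''c
  have hb2 : ∀ x, |deriv (deriv g) x| ≤ max C 0 * |x| ^ 1 :=
    fun x => mvt_step hg''d h2 (le_max_right _ _)
      (fun t => by rw [pow_zero, mul_one]; exact le_trans (le_trans (Real.norm_eq_abs _ ▸ le_refl _) (hC t)) (le_max_left _ _)) x
  have hb1 : ∀ x, |deriv g x| ≤ max C 0 * |x| ^ 2 :=
    fun x => mvt_step hg'd h1 (le_max_right _ _) hb2 x
  exact ⟨max C 0, le_max_right _ _,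
    fun x => mvt_step hgd h0 (le_max_right _ _) hb1 x, hb1⟩

/-- Weighted Hardy inequality: for `p ∈ {2,4}` and smooth compactly supported
`g` with `g(0) = g'(0) = 0` (and `g''(0) = 0` if `p = 4`),
`∫ g²/|x|^{p+2} ≤ (2/(p+1))² ∫ (g')²/|x|^p`, both integrals being finite. -/
theorem weighted_hardy_inequality (p : ℕ) (hp : p = 2 ∨ p = 4)
    (g : ℝ → ℝ) (hg : ContDiff ℝ (⊤ : ℕ∞) g) (hsupp : HasCompactSupport g)
    (h0 : g 0 = 0) (h1 : deriv g 0 = 0)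
    (h2 : p = 4 → deriv (deriv g) 0 = 0) :
    Integrable (fun x : ℝ => (g x)^2 / |x| ^ (p + 2)) ∧
    Integrable (fun x : ℝ => (deriv g x)^2 / |x| ^ p) ∧
    ∫ x : ℝ, (g x)^2 / |x| ^ (p + 2) ≤
      (2 / ((p : ℝ) + 1))^2 * ∫ x : ℝ, (deriv g x)^2 / |x| ^ p := by
  rcases hp with rfl | rfl
  · obtain ⟨M, hM, hb, hb'⟩ := hardy_bounds1 g hg hsupp h0 h1
    have H := hardy_main 1 g hg hsupp hM hb hb'
    refine ⟨H.1, H.2.1, ?_⟩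
    have h3 := H.2.2
    norm_num at h3 ⊢
    exact h3
  · obtain ⟨M, hM, hb, hb'⟩ := hardy_bounds2 g hg hsupp h0 h1 (h2 rfl)
    have H := hardy_main 2 g hg hsupp hM hb hb'
    refine ⟨H.1, H.2.1, ?_⟩
    have h3 := H.2.2
    norm_num at h3 ⊢
    exact h3
end

section
/- There exists an absolute constant C > 0 such that for every real n ≥ 1 and all x, y ≥ 0, ( x^{(n+1)/2} − y^{(n+1)/2} )² ≤ C·n·( xⁿ − yⁿ )·( x − y ). -/
open Real

lemma aux_pmi (n : ℝ) (hn : 1 ≤ n) (x y : ℝ) (hy : 0 ≤ y) (hxy : y ≤ x) :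
    (x ^ ((n + 1) / 2) - y ^ ((n + 1) / 2))^2 ≤ n * (x ^ n - y ^ n) * (x - y) := by
  set m := (n + 1) / 2 with hm_def
  have hm : 1 ≤ m := by rw [hm_def]; linarith
  have hmn : m ≤ n := by rw [hm_def]; linarith
  have hx : 0 ≤ x := hy.trans hxy
  rcases eq_or_lt_of_le hx with h0 | hxpos
  · have hx0 : x = 0 := h0.symm
    have hy0 : y = 0 := le_antisymm (hxy.trans_eq hx0) hy
    subst hx0; subst hy0
    rw [Real.zero_rpow (by linarith : m ≠ 0), Real.zero_rpow (by linarith : n ≠ 0)]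
    norm_num
  · have hm1 : (0:ℝ) ≤ m - 1 := by linarith
    have hA : 0 ≤ x ^ m - y ^ m :=
      sub_nonneg.2 (Real.rpow_le_rpow hy hxy (by linarith))
    have hB : 0 ≤ x ^ n - y ^ n :=
      sub_nonneg.2 (Real.rpow_le_rpow hy hxy (by linarith))
    have hD : 0 ≤ x - y := sub_nonneg.2 hxy
    have emn : m - 1 + m = n := by rw [hm_def]; ring
    have e1 : x ^ (m - 1) * x ^ m = x ^ n := by
      rw [← Real.rpow_add hxpos, emn]
    have e2 : y ^ (m - 1) * y ^ m = y ^ n := by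
      rw [← Real.rpow_add' hy (by rw [emn]; linarith), emn]
    have key1 : x ^ (m - 1) * (x ^ m - y ^ m) ≤ x ^ n - y ^ n := by
      have h3 : y ^ n ≤ x ^ (m - 1) * y ^ m := by
        rw [← e2]
        exact mul_le_mul_of_nonneg_right (Real.rpow_le_rpow hy hxy hm1)
          (Real.rpow_nonneg hy m)
      nlinarith [e1]
    have key2 : x ^ m - y ^ m ≤ m * x ^ (m - 1) * (x - y) := by
      have hb := one_add_mul_self_le_rpow_one_add
        (s := y / x - 1) (by have : 0 ≤ y / x := div_nonneg hy hx; linarith) hm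
      have hrw : (1 + (y / x - 1)) = y / x := by ring
      rw [hrw] at hb
      have hxm : (0:ℝ) < x ^ m := Real.rpow_pos_of_pos hxpos m
      have hdiv : (y / x) ^ m = y ^ m / x ^ m := Real.div_rpow hy (le_of_lt hxpos) m
      have ex : x ^ m = x * x ^ (m - 1) := by
        rw [← Real.rpow_one_add' (le_of_lt hxpos) (by rw [show 1 + (m-1) = m from by ring]; linarith)]
        norm_num
      have h4 : (1 + m * (y / x - 1)) * x ^ m ≤ y ^ m := by
        calc (1 + m * (y / x - 1)) * x ^ m ≤ (y / x) ^ m * x ^ m :=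
              mul_le_mul_of_nonneg_right hb hxm.le
          _ = y ^ m := by rw [hdiv]; field_simp
      have h5 : (y / x) * x ^ m = y * x ^ (m - 1) := by
        rw [ex]; field_simp
      have goal' : x ^ m - y ^ m ≤ m * (x ^ m - y * x ^ (m - 1)) := by nlinarith [h4, h5]
      calc x ^ m - y ^ m ≤ m * (x ^ m - y * x ^ (m - 1)) := goal'
        _ = m * x ^ (m - 1) * (x - y) := by rw [ex]; ring
    nlinarith [mul_le_mul_of_nonneg_right key2 hA,
      mul_le_mul_of_nonneg_left key1 (mul_nonneg (by linarith : (0:ℝ) ≤ m) hD),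
      mul_le_mul_of_nonneg_right hmn (mul_nonneg hB hD)]

/-- There is an absolute constant `C > 0` such that for every real `n ≥ 1`
and all `x, y ≥ 0`, `(x^{(n+1)/2} − y^{(n+1)/2})² ≤ C·n·(xⁿ − yⁿ)(x − y)`. -/
theorem pow_mean_inequality :
    ∃ C : ℝ, 0 < C ∧
      ∀ n : ℝ, 1 ≤ n → ∀ x y : ℝ, 0 ≤ x → 0 ≤ y →
        (x ^ ((n + 1) / 2) - y ^ ((n + 1) / 2))^2
          ≤ C * n * (x ^ n - y ^ n) * (x - y) := by
  refine ⟨1, one_pos, fun n hn x y hx hy => ?_⟩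
  rcases le_total y x with h | h
  · simpa using aux_pmi n hn x y hy h
  · have := aux_pmi n hn y x hx h
    calc (x ^ ((n + 1) / 2) - y ^ ((n + 1) / 2))^2
        = (y ^ ((n + 1) / 2) - x ^ ((n + 1) / 2))^2 := by ring
      _ ≤ n * (y ^ n - x ^ n) * (y - x) := this
      _ = 1 * n * (x ^ n - y ^ n) * (x - y) := by ring
end

section
/- There exists an absolute constant C > 0 such that for every p ≥ 1 and all real numbers a, b, ( sgn(a)·|a|^{p−1} − sgn(b)·|b|^{p−1} )·( a − b ) ≥ C·min(p−1, 1/p)·( |a|^{p/2} − |b|^{p/2} )². -/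
open Real

/-- The odd power function `t ↦ sgn(t)·|t|^{p−1}` (equal to `t·|t|^{p−2}` for
`t ≠ 0` and to `0` at `t = 0`). -/
noncomputable def oddPow (p t : ℝ) : ℝ := Real.sign t * |t| ^ (p - 1)

private lemma convexOn_sinh' : ConvexOn ℝ (Set.Ici (0:ℝ)) Real.sinh := by
  have h2 : deriv^[2] Real.sinh = Real.sinh := by
    ext y
    simp [Function.iterate_succ_apply', Real.deriv_sinh, Real.deriv_cosh]
  apply convexOn_of_deriv2_nonneg (convex_Ici 0) Real.continuous_sinh.continuousOn
    Real.differentiable_sinh.differentiableOn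
  · rw [Real.deriv_sinh]
    exact Real.differentiable_cosh.differentiableOn
  · intro x hx
    rw [h2]
    rw [interior_Ici] at hx
    exact Real.sinh_nonneg_iff.2 (le_of_lt hx)

private lemma sinh_smul_le {l x : ℝ} (hl0 : 0 ≤ l) (hl1 : l ≤ 1) (hx : 0 ≤ x) :
    Real.sinh (l * x) ≤ l * Real.sinh x := by
  have h := convexOn_sinh'.2 (Set.mem_Ici.2 hx) (Set.mem_Ici.2 (le_refl (0:ℝ)))
    hl0 (by linarith : (0:ℝ) ≤ 1 - l) (by ring)
  simpa using h

private lemma sinh_prod_ge {s x : ℝ} (h0 : 0 ≤ s) (h2 : s ≤ 2) (hx : 0 ≤ x) :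
    s * (2 - s) * Real.sinh x ^ 2 ≤ Real.sinh (s * x) * Real.sinh ((2 - s) * x) := by
  set l := |s - 1| with hl
  have hl0 : 0 ≤ l := abs_nonneg _
  have hl1 : l ≤ 1 := abs_le.2 ⟨by linarith, by linarith⟩
  have key : Real.sinh (l * x) ≤ l * Real.sinh x := sinh_smul_le hl0 hl1 hx
  have hs0 : 0 ≤ Real.sinh (l * x) := Real.sinh_nonneg_iff.2 (by positivity)
  have hsx : 0 ≤ Real.sinh x := Real.sinh_nonneg_iff.2 hx
  have ksq : Real.sinh (l * x) ^ 2 ≤ (l * Real.sinh x) ^ 2 := by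
    apply pow_le_pow_left₀ hs0 key
  have hadd := Real.cosh_add (s * x) ((2 - s) * x)
  have hsub := Real.cosh_sub (s * x) ((2 - s) * x)
  have habs : Real.cosh (s * x - (2 - s) * x) = Real.cosh (l * x + l * x) := by
    rw [← Real.cosh_abs (s * x - (2 - s) * x), ← Real.cosh_abs (l * x + l * x)]
    congr 1
    rw [abs_of_nonneg (by positivity : (0:ℝ) ≤ l * x + l * x)]
    have e : s * x - (2 - s) * x = (s - 1) * (2 * x) := by ring
    rw [e, abs_mul, abs_of_nonneg (by positivity : (0:ℝ) ≤ 2 * x)]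
    rw [← hl]; ring
  have c1 : Real.cosh (s * x + (2 - s) * x) = 2 * Real.sinh x ^ 2 + 1 := by
    have e : s * x + (2 - s) * x = x + x := by ring
    rw [e, Real.cosh_add]
    have := Real.cosh_sq x
    nlinarith [this]
  have c2 : Real.cosh (l * x + l * x) = 2 * Real.sinh (l * x) ^ 2 + 1 := by
    rw [Real.cosh_add]
    have := Real.cosh_sq (l * x)
    nlinarith [this]
  have hll : l ^ 2 = (s - 1) ^ 2 := sq_abs _
  nlinarith [ksq, hadd, hsub, habs, c1, c2, hll]

private lemma exp_key {α β s : ℝ} (hab : β ≤ α) (h0 : 0 ≤ s) (h2 : s ≤ 2) :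
    s * (2 - s) * (Real.exp α - Real.exp β) ^ 2
      ≤ (Real.exp (s * α) - Real.exp (s * β)) * (Real.exp ((2 - s) * α) - Real.exp ((2 - s) * β)) := by
  set m := (α + β) / 2 with hm
  set x := (α - β) / 2 with hxdef
  have hx : 0 ≤ x := by rw [hxdef]; linarith
  have hmx : α = m + x := by rw [hm, hxdef]; ring
  have hmy : β = m - x := by rw [hm, hxdef]; ring
  have d : ∀ c : ℝ, Real.exp (c * α) - Real.exp (c * β)
      = Real.exp (c * m) * (2 * Real.sinh (c * x)) := by
    intro c
    rw [Real.sinh_eq, hmx, hmy]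
    have e1 : c * (m + x) = c * m + c * x := by ring
    have e2 : c * (m - x) = c * m + -(c * x) := by ring
    rw [e1, e2, Real.exp_add, Real.exp_add]
    ring
  have d1 : Real.exp α - Real.exp β = Real.exp m * (2 * Real.sinh x) := by
    have := d 1
    simpa using this
  have L2 := sinh_prod_ge h0 h2 hx
  have e2m : Real.exp (s * m) * Real.exp ((2 - s) * m) = Real.exp m ^ 2 := by
    rw [← Real.exp_add, sq, ← Real.exp_add]
    ring_nf
  rw [d1, d s, d (2 - s)]
  calc s * (2 - s) * (Real.exp m * (2 * Real.sinh x)) ^ 2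
      = Real.exp m ^ 2 * 4 * (s * (2 - s) * Real.sinh x ^ 2) := by ring
    _ ≤ Real.exp m ^ 2 * 4 * (Real.sinh (s * x) * Real.sinh ((2 - s) * x)) := by
        apply mul_le_mul_of_nonneg_left L2 (by positivity)
    _ = Real.exp (s * m) * (2 * Real.sinh (s * x))
        * (Real.exp ((2 - s) * m) * (2 * Real.sinh ((2 - s) * x))) := by
        rw [show Real.exp (s * m) * (2 * Real.sinh (s * x))
            * (Real.exp ((2 - s) * m) * (2 * Real.sinh ((2 - s) * x)))
            = Real.exp (s * m) * Real.exp ((2 - s) * m)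
              * (4 * (Real.sinh (s * x) * Real.sinh ((2 - s) * x))) from by ring, e2m]
        ring

private lemma rpow_key {u v s : ℝ} (hv : 0 < v) (huv : v ≤ u) (h0 : 0 ≤ s) (h2 : s ≤ 2) :
    s * (2 - s) * (u - v) ^ 2 ≤ (u ^ s - v ^ s) * (u ^ (2 - s) - v ^ (2 - s)) := by
  have hu : 0 < u := lt_of_lt_of_le hv huv
  have key := exp_key (Real.log_le_log hv huv) h0 h2
  rw [Real.exp_log hu, Real.exp_log hv] at key
  rw [Real.rpow_def_of_pos hu, Real.rpow_def_of_pos hv,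
    Real.rpow_def_of_pos hu, Real.rpow_def_of_pos hv]
  calc s * (2 - s) * (u - v) ^ 2
      ≤ (Real.exp (s * Real.log u) - Real.exp (s * Real.log v))
        * (Real.exp ((2 - s) * Real.log u) - Real.exp ((2 - s) * Real.log v)) := key
    _ = (Real.exp (Real.log u * s) - Real.exp (Real.log v * s))
        * (Real.exp (Real.log u * (2 - s)) - Real.exp (Real.log v * (2 - s))) := by
        rw [mul_comm s (Real.log u), mul_comm s (Real.log v),
          mul_comm (2 - s) (Real.log u), mul_comm (2 - s) (Real.log v)]

private lemma pos_key {a b p : ℝ} (hp : 1 ≤ p) (hb : 0 < b) (hba : b ≤ a) :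
    4 * (p - 1) / p ^ 2 * (a ^ (p / 2) - b ^ (p / 2)) ^ 2
      ≤ (a ^ (p - 1) - b ^ (p - 1)) * (a - b) := by
  have hp0 : 0 < p := lt_of_lt_of_le one_pos hp
  have ha : 0 < a := lt_of_lt_of_le hb hba
  set s := 2 * (p - 1) / p with hs
  have hs0 : 0 ≤ s := by
    apply div_nonneg _ hp0.le
    linarith
  have hs2 : s ≤ 2 := by
    rw [hs, div_le_iff₀ hp0]
    linarith
  have hu : b ^ (p / 2) ≤ a ^ (p / 2) := Real.rpow_le_rpow hb.le hba (by positivity)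
  have hvpos : (0:ℝ) < b ^ (p / 2) := Real.rpow_pos_of_pos hb _
  have key := rpow_key hvpos hu hs0 hs2
  have eS : p / 2 * s = p - 1 := by
    rw [hs]; field_simp
  have eR : p / 2 * (2 - s) = 1 := by
    rw [hs]; field_simp; ring
  have r1 : (a ^ (p / 2)) ^ s = a ^ (p - 1) := by
    rw [← Real.rpow_mul ha.le, eS]
  have r2 : (b ^ (p / 2)) ^ s = b ^ (p - 1) := by
    rw [← Real.rpow_mul hb.le, eS]
  have r3 : (a ^ (p / 2)) ^ (2 - s) = a := by
    rw [← Real.rpow_mul ha.le, eR, Real.rpow_one]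
  have r4 : (b ^ (p / 2)) ^ (2 - s) = b := by
    rw [← Real.rpow_mul hb.le, eR, Real.rpow_one]
  have rc : s * (2 - s) = 4 * (p - 1) / p ^ 2 := by
    rw [hs]; field_simp; ring
  rw [r1, r2, r3, r4, rc] at key
  exact key

private lemma oddPow_neg (p t : ℝ) : oddPow p (-t) = - oddPow p t := by
  simp [oddPow, Real.sign_neg, abs_neg, neg_mul]

private lemma oddPow_of_pos {p t : ℝ} (ht : 0 < t) : oddPow p t = t ^ (p - 1) := by
  simp [oddPow, Real.sign_of_pos ht, abs_of_pos ht]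

private lemma oddPow_zero (p : ℝ) : oddPow p 0 = 0 := by
  simp [oddPow, Real.sign_zero]

private lemma oddPow_nonneg {p t : ℝ} (ht : 0 ≤ t) : 0 ≤ oddPow p t := by
  rcases eq_or_lt_of_le ht with h | h
  · rw [← h, oddPow_zero]
  · rw [oddPow_of_pos h]
    positivity

private lemma oddPow_mul_self {p t : ℝ} (hp : 0 < p) (ht : 0 ≤ t) :
    oddPow p t * t = t ^ p := by
  rcases eq_or_lt_of_le ht with h | h
  · rw [← h, oddPow_zero, Real.zero_rpow (ne_of_gt hp), mul_zero]
  · have e : t ^ (p - 1) * t = t ^ (p - 1) * t ^ (1:ℝ) := by rw [Real.rpow_one]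
    rw [oddPow_of_pos h, e, ← Real.rpow_add h]
    norm_num

private lemma rpow_half_sq {t p : ℝ} (ht : 0 ≤ t) : (t ^ (p / 2)) ^ 2 = t ^ p := by
  rw [← Real.rpow_natCast (t ^ (p / 2)) 2, ← Real.rpow_mul ht]
  norm_num

private lemma min_le_one {p : ℝ} (hp : 1 ≤ p) : min (p - 1) (1 / p) ≤ 1 := by
  have hp0 : 0 < p := lt_of_lt_of_le one_pos hp
  refine le_trans (min_le_right _ _) ?_
  rw [div_le_one hp0]
  linarith

private lemma min_nonneg' {p : ℝ} (hp : 1 ≤ p) : 0 ≤ min (p - 1) (1 / p) := by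
  have hp0 : 0 < p := lt_of_lt_of_le one_pos hp
  exact le_min (by linarith) (by positivity)

private lemma main_pos {p a b : ℝ} (hp : 1 ≤ p) (hb : 0 ≤ b) (hba : b ≤ a) :
    min (p - 1) (1 / p) * (|a| ^ (p / 2) - |b| ^ (p / 2)) ^ 2
      ≤ (oddPow p a - oddPow p b) * (a - b) := by
  have hp0 : 0 < p := lt_of_lt_of_le one_pos hp
  have ha : 0 ≤ a := le_trans hb hba
  rw [abs_of_nonneg ha, abs_of_nonneg hb]
  rcases eq_or_lt_of_le hb with hb0 | hbpos
  · -- b = 0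
    rw [← hb0]
    rw [Real.zero_rpow (by positivity : p / 2 ≠ 0), oddPow_zero]
    rcases eq_or_lt_of_le ha with ha0 | hapos
    · rw [← ha0]
      rw [Real.zero_rpow (by positivity : p / 2 ≠ 0), oddPow_zero]
      norm_num
    · have e1 : (a ^ (p / 2) - 0) ^ 2 = a ^ p := by
        rw [sub_zero, rpow_half_sq ha]
      have e2 : (oddPow p a - 0) * (a - 0) = a ^ p := by
        rw [sub_zero, sub_zero, oddPow_mul_self hp0 ha]
      rw [e1, e2]
      have h1 : min (p - 1) (1 / p) ≤ 1 := min_le_one hp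
      nlinarith [Real.rpow_nonneg ha p]
  · -- 0 < b
    have hmin : min (p - 1) (1 / p) ≤ 4 * (p - 1) / p ^ 2 := by
      rcases le_total p 2 with h | h
      · refine le_trans (min_le_left _ _) ?_
        rw [le_div_iff₀ (by positivity)]
        have h4 : p ^ 2 ≤ 4 := by nlinarith
        nlinarith [mul_nonneg (by linarith : (0:ℝ) ≤ p - 1) (by linarith : (0:ℝ) ≤ 4 - p ^ 2)]
      · refine le_trans (min_le_right _ _) ?_
        rw [div_le_div_iff₀ hp0 (by positivity)]
        nlinarith [mul_nonneg (by linarith : (0:ℝ) ≤ p) (by linarith : (0:ℝ) ≤ 3 * p - 4)]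
    have hkey := pos_key hp hbpos hba
    have hab : 0 < a := lt_of_lt_of_le hbpos hba
    rw [oddPow_of_pos hab, oddPow_of_pos hbpos]
    refine le_trans (mul_le_mul_of_nonneg_right hmin (sq_nonneg _)) hkey

private lemma main_mixed {p a b : ℝ} (hp : 1 ≤ p) (hb : b ≤ 0) (ha : 0 ≤ a) :
    min (p - 1) (1 / p) * (|a| ^ (p / 2) - |b| ^ (p / 2)) ^ 2
      ≤ (oddPow p a - oddPow p b) * (a - b) := by
  have hp0 : 0 < p := lt_of_lt_of_le one_pos hp
  have hA : 0 ≤ oddPow p a := oddPow_nonneg ha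
  have hBneg : 0 ≤ - oddPow p b := by
    rw [← oddPow_neg]
    exact oddPow_nonneg (by linarith)
  have r1 : oddPow p a * a = a ^ p := oddPow_mul_self hp0 ha
  have r2 : oddPow p b * b = |b| ^ p := by
    have h := oddPow_mul_self hp0 (by linarith : (0:ℝ) ≤ -b)
    rw [oddPow_neg] at h
    rw [abs_of_nonpos hb]
    nlinarith [h]
  have hX : 0 ≤ |a| ^ (p / 2) := Real.rpow_nonneg (abs_nonneg a) _
  have hY : 0 ≤ |b| ^ (p / 2) := Real.rpow_nonneg (abs_nonneg b) _
  have sX : (|a| ^ (p / 2)) ^ 2 = a ^ p := by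
    rw [rpow_half_sq (abs_nonneg a), abs_of_nonneg ha]
  have sY : (|b| ^ (p / 2)) ^ 2 = |b| ^ p := rpow_half_sq (abs_nonneg b)
  have h1 : min (p - 1) (1 / p) ≤ 1 := min_le_one hp
  have h0 : 0 ≤ min (p - 1) (1 / p) := min_nonneg' hp
  nlinarith [mul_nonneg hA (by linarith : (0:ℝ) ≤ -b), mul_nonneg hBneg ha,
    mul_nonneg hX hY, sq_nonneg (|a| ^ (p / 2) - |b| ^ (p / 2))]

private lemma main_le {p : ℝ} (hp : 1 ≤ p) {a b : ℝ} (hba : b ≤ a) :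
    min (p - 1) (1 / p) * (|a| ^ (p / 2) - |b| ^ (p / 2)) ^ 2
      ≤ (oddPow p a - oddPow p b) * (a - b) := by
  rcases le_or_gt 0 b with hb | hb
  · exact main_pos hp hb hba
  rcases le_or_gt 0 a with ha | ha
  · exact main_mixed hp hb.le ha
  · have h := main_pos hp (by linarith : (0:ℝ) ≤ -a) (by linarith : -a ≤ -b)
    rw [abs_neg, abs_neg, oddPow_neg, oddPow_neg] at h
    have e1 : (|b| ^ (p / 2) - |a| ^ (p / 2)) ^ 2 = (|a| ^ (p / 2) - |b| ^ (p / 2)) ^ 2 := by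
      ring
    have e2 : (-oddPow p b - -oddPow p a) * (-b - -a) = (oddPow p a - oddPow p b) * (a - b) := by
      ring
    rw [e1, e2] at h
    exact h

/-- There is an absolute constant `C > 0` such that for every `p ≥ 1` and all
reals `a, b`,
`(sgn(a)|a|^{p−1} − sgn(b)|b|^{p−1})(a − b) ≥ C·min(p−1, 1/p)·(|a|^{p/2} − |b|^{p/2})²`. -/
theorem oddPow_diff_lower_bound :
    ∃ C : ℝ, 0 < C ∧
      ∀ p : ℝ, 1 ≤ p → ∀ a b : ℝ,
        C * min (p - 1) (1 / p) * (|a| ^ (p / 2) - |b| ^ (p / 2))^2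
          ≤ (oddPow p a - oddPow p b) * (a - b) := by
  refine ⟨1, one_pos, ?_⟩
  intro p hp a b
  rw [one_mul]
  rcases le_total b a with h | h
  · exact main_le hp h
  · have h' := main_le hp h
    have e1 : (|a| ^ (p / 2) - |b| ^ (p / 2)) ^ 2 = (|b| ^ (p / 2) - |a| ^ (p / 2)) ^ 2 := by
      ring
    have e2 : (oddPow p b - oddPow p a) * (b - a) = (oddPow p a - oddPow p b) * (a - b) := by
      ring
    rw [e1, ← e2]
    exact h'
end

section
/- There exists a constant C > 0 such that for every q ∈ [1, 5/4] and every measurable function f: ℝ → [0, ∞) with ∫_ℝ f(x)^{2/q} dx < ∞ and ∬_{ℝ×ℝ} ( f(x) − f(y) )² / (x−y)² dx dy < ∞, one has ∫_ℝ f(x)^{1 + 2/q} dx ≤ C · ( ∫_ℝ f(x)^{2/q} dx ) · ( ∬_{ℝ×ℝ} ( f(x) − f(y) )² / (x−y)² dx dy )^{1/2}. -/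
open MeasureTheory Real
open scoped ENNReal

lemma aux_vanish (α A c : ℝ) (hα : 1 ≤ α) (hA : 0 < A) (hc : 0 ≤ c)
    (h : ∀ r : ℝ, 0 < r → c ≤ (A / (2*r)) ^ (1/α)) : c = 0 := by
  by_contra hc0
  have hcpos : 0 < c := lt_of_le_of_ne hc (Ne.symm hc0)
  have hαpos : 0 < α := by linarith
  set ε := c / 2 with hε
  have hεpos : 0 < ε := by positivity
  set r := A / (2 * ε ^ α) with hr
  have hrpos : 0 < r := by positivity
  have h1 : A / (2 * r) = ε ^ α := by
    rw [hr]; field_simp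
  have h2 := h r hrpos
  rw [h1, ← Real.rpow_mul hεpos.le, mul_one_div, div_self (ne_of_gt hαpos),
    Real.rpow_one] at h2
  have : ε < c := by simp only [hε]; linarith
  linarith

lemma aux_balance (α A d c : ℝ) (hα : 1 ≤ α) (hA : 0 < A) (hd : 0 < d) (hc : 0 ≤ c)
    (h : ∀ r : ℝ, 0 < r → c ≤ Real.sqrt (r * d / 2) + (A / (2*r)) ^ (1/α)) :
    c ^ (α + 2) ≤ 2 ^ α * A * d := by
  have hαpos : 0 < α := by linarith
  set t := (A * d / 4) ^ (1/(α+2)) with ht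
  have htpos : 0 < t := by
    apply Real.rpow_pos_of_pos; positivity
  set r := A / (2 * t ^ α) with hr
  have hrpos : 0 < r := by positivity
  have h1 : A / (2 * r) = t ^ α := by rw [hr]; field_simp
  have hconv : t ^ (2:ℝ) = t ^ 2 := by
    rw [show (2:ℝ) = ((2:ℕ):ℝ) by norm_num, Real.rpow_natCast]
  have htsum : t ^ α * t ^ 2 = A * d / 4 := by
    rw [← hconv, ← Real.rpow_add htpos, ht, ← Real.rpow_mul (by positivity),
      one_div, inv_mul_cancel₀ (by positivity), Real.rpow_one]
  have h2 : r * d / 2 = t ^ 2 := by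
    have hta : t ^ α ≠ 0 := by positivity
    rw [hr]
    field_simp
    linear_combination (-4) * htsum
  have h3 := h r hrpos
  rw [h1, h2, ← Real.rpow_mul htpos.le, mul_one_div, div_self (ne_of_gt hαpos),
    Real.rpow_one] at h3
  have h4 : Real.sqrt (t ^ 2) = t := by
    rw [Real.sqrt_sq htpos.le]
  rw [h4] at h3
  -- h3 : c ≤ 2 * t
  have h5 : c ^ (α+2) ≤ (2*t) ^ (α+2) :=
    Real.rpow_le_rpow hc (by linarith) (by positivity)
  calc c ^ (α+2) ≤ (2*t) ^ (α+2) := h5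
    _ = 2 ^ (α+2) * t ^ (α+2) := Real.mul_rpow (by norm_num) htpos.le
    _ = 2 ^ (α+2) * (A * d / 4) := by
        rw [show t ^ (α+2) = t ^ α * t ^ 2 by rw [← hconv, ← Real.rpow_add htpos], htsum]
    _ = 2 ^ α * A * d := by
        rw [Real.rpow_add (by norm_num : (0:ℝ) < 2)]
        norm_num [Real.rpow_two]
        ring

lemma ptwise (f : ℝ → ℝ) (hm : Measurable f) (hnn : ∀ x, 0 ≤ f x) {α : ℝ} (hα : 1 < α)
    (x r : ℝ) (hr : 0 < r) :
    ENNReal.ofReal (f x) * ENNReal.ofReal (2*r) ≤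
      (ENNReal.ofReal (r^2) * ∫⁻ y, ENNReal.ofReal ((f x - f y)^2/(x-y)^2)) ^ ((1:ℝ)/2)
        * ENNReal.ofReal (2*r) ^ ((1:ℝ)/2)
      + (∫⁻ y, ENNReal.ofReal (f y ^ α)) ^ (1/α) * ENNReal.ofReal (2*r) ^ (1 - 1/α) := by
  have hαpos : 0 < α := by linarith
  set s : Set ℝ := Set.Ioo (x-r) (x+r) with hs
  have hvol : volume s = ENNReal.ofReal (2*r) := by
    rw [hs, Real.volume_Ioo]; ring_nf
  -- measurability helpers
  have hmabs : Measurable fun y => ENNReal.ofReal |f x - f y| :=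
    ((measurable_const.sub hm).abs).ennreal_ofReal
  have hmg : Measurable fun y => ENNReal.ofReal (f y) := hm.ennreal_ofReal
  have hmratio : Measurable fun y : ℝ =>
      ENNReal.ofReal ((f x - f y)^2/(x-y)^2) :=
    (((measurable_const.sub hm).pow_const 2).div
      ((measurable_const.sub measurable_id).pow_const 2)).ennreal_ofReal
  -- step 0/1/2
  have step0 : ENNReal.ofReal (f x) * ENNReal.ofReal (2*r)
      = ∫⁻ _ in s, ENNReal.ofReal (f x) := by
    rw [setLIntegral_const, hvol]
  have step1 : (∫⁻ _ in s, ENNReal.ofReal (f x)) ≤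
      (∫⁻ y in s, ENNReal.ofReal |f x - f y|) + ∫⁻ y in s, ENNReal.ofReal (f y) := by
    rw [← lintegral_add_left hmabs]
    refine lintegral_mono fun y => ?_
    rw [← ENNReal.ofReal_add (abs_nonneg _) (hnn y)]
    refine ENNReal.ofReal_le_ofReal ?_
    have := abs_sub_abs_le_abs_sub (f x) (f y)
    have h1 : f x ≤ |f x - f y| + f y := by
      have := le_abs_self (f x - f y); linarith
    exact h1
  -- Cauchy-Schwarz for term I
  have htwo : (2:ℝ).HolderConjugate 2 := Real.HolderConjugate.two_two
  have CS : (∫⁻ y in s, ENNReal.ofReal |f x - f y|) ≤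
      (∫⁻ y in s, ENNReal.ofReal |f x - f y| ^ (2:ℝ)) ^ ((1:ℝ)/2)
        * (∫⁻ _ in s, (1:ℝ≥0∞) ^ (2:ℝ)) ^ ((1:ℝ)/2) := by
    have := ENNReal.lintegral_mul_le_Lp_mul_Lq (volume.restrict s) htwo
      hmabs.aemeasurable (aemeasurable_const (b := (1:ℝ≥0∞)))
    simpa using this
  have hone : (∫⁻ _ in s, (1:ℝ≥0∞) ^ (2:ℝ)) = ENNReal.ofReal (2*r) := by
    simp [setLIntegral_const, hvol]
  have hsq : ∀ y, ENNReal.ofReal |f x - f y| ^ (2:ℝ)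
      = ENNReal.ofReal ((f x - f y)^2) := by
    intro y
    rw [ENNReal.ofReal_rpow_of_nonneg (abs_nonneg _) (by norm_num : (0:ℝ) ≤ 2)]
    congr 1
    rw [Real.rpow_two, sq_abs]
  have hI2 : (∫⁻ y in s, ENNReal.ofReal ((f x - f y)^2)) ≤
      ENNReal.ofReal (r^2) * ∫⁻ y, ENNReal.ofReal ((f x - f y)^2/(x-y)^2) := by
    have mono : (∫⁻ y in s, ENNReal.ofReal ((f x - f y)^2)) ≤
        ∫⁻ y in s, ENNReal.ofReal (r^2) * ENNReal.ofReal ((f x - f y)^2/(x-y)^2) := by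
      refine setLIntegral_mono (measurable_const.mul hmratio) fun y hy => ?_
      rcases eq_or_ne y x with rfl | hyx
      · simp
      · have hxy : (x - y) ≠ 0 := sub_ne_zero.2 (Ne.symm hyx)
        have hxy2 : (0:ℝ) < (x - y)^2 := by positivity
        have habs : |x - y| < r := by
          rw [abs_sub_lt_iff]; constructor <;> [skip; skip] <;>
            · rcases hy with ⟨h1, h2⟩; linarith
        have hle : (x - y)^2 ≤ r^2 := by
          have := sq_abs (x - y)
          nlinarith [abs_nonneg (x - y)]
        rw [← ENNReal.ofReal_mul (by positivity)]
        refine ENNReal.ofReal_le_ofReal ?_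
        have hratnn : 0 ≤ (f x - f y)^2/(x-y)^2 := by positivity
        calc (f x - f y)^2 = (x-y)^2 * ((f x - f y)^2/(x-y)^2) := by
              field_simp
          _ ≤ r^2 * ((f x - f y)^2/(x-y)^2) :=
              mul_le_mul_of_nonneg_right hle hratnn
    calc (∫⁻ y in s, ENNReal.ofReal ((f x - f y)^2)) ≤
        ∫⁻ y in s, ENNReal.ofReal (r^2) * ENNReal.ofReal ((f x - f y)^2/(x-y)^2) := mono
      _ = ENNReal.ofReal (r^2) * ∫⁻ y in s, ENNReal.ofReal ((f x - f y)^2/(x-y)^2) :=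
          lintegral_const_mul _ hmratio
      _ ≤ ENNReal.ofReal (r^2) * ∫⁻ y, ENNReal.ofReal ((f x - f y)^2/(x-y)^2) :=
          mul_le_mul_right (setLIntegral_le_lintegral _ _) _
  have termI : (∫⁻ y in s, ENNReal.ofReal |f x - f y|) ≤
      (ENNReal.ofReal (r^2) * ∫⁻ y, ENNReal.ofReal ((f x - f y)^2/(x-y)^2)) ^ ((1:ℝ)/2)
        * ENNReal.ofReal (2*r) ^ ((1:ℝ)/2) := by
    refine CS.trans ?_
    rw [hone]
    refine mul_le_mul_left (ENNReal.rpow_le_rpow ?_ (by norm_num)) _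
    calc (∫⁻ y in s, ENNReal.ofReal |f x - f y| ^ (2:ℝ))
        = ∫⁻ y in s, ENNReal.ofReal ((f x - f y)^2) := by
          refine lintegral_congr fun y => hsq y
      _ ≤ _ := hI2
  -- Hölder for term II
  set β := α / (α - 1) with hβ
  have hconj : α.HolderConjugate β := (Real.holderConjugate_iff_eq_conjExponent hα).2 rfl
  have H : (∫⁻ y in s, ENNReal.ofReal (f y)) ≤
      (∫⁻ y in s, ENNReal.ofReal (f y) ^ α) ^ (1/α)
        * (∫⁻ _ in s, (1:ℝ≥0∞) ^ β) ^ (1/β) := by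
    have := ENNReal.lintegral_mul_le_Lp_mul_Lq (volume.restrict s) hconj
      hmg.aemeasurable (aemeasurable_const (b := (1:ℝ≥0∞)))
    simpa using this
  have honeβ : (∫⁻ _ in s, (1:ℝ≥0∞) ^ β) = ENNReal.ofReal (2*r) := by
    simp [setLIntegral_const, hvol]
  have termII : (∫⁻ y in s, ENNReal.ofReal (f y)) ≤
      (∫⁻ y, ENNReal.ofReal (f y ^ α)) ^ (1/α) * ENNReal.ofReal (2*r) ^ (1 - 1/α) := by
    refine H.trans ?_
    rw [honeβ]
    have hβinv : 1/β = 1 - 1/α := by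
      rw [one_div, one_div, ← hconj.one_sub_inv]
    rw [hβinv]
    refine mul_le_mul_left (ENNReal.rpow_le_rpow ?_ (by positivity)) _
    calc (∫⁻ y in s, ENNReal.ofReal (f y) ^ α)
        = ∫⁻ y in s, ENNReal.ofReal (f y ^ α) := by
          refine lintegral_congr fun y => ?_
          rw [ENNReal.ofReal_rpow_of_nonneg (hnn y) hαpos.le]
      _ ≤ _ := setLIntegral_le_lintegral _ _
  calc ENNReal.ofReal (f x) * ENNReal.ofReal (2*r)
      = ∫⁻ _ in s, ENNReal.ofReal (f x) := step0
    _ ≤ (∫⁻ y in s, ENNReal.ofReal |f x - f y|) + ∫⁻ y in s, ENNReal.ofReal (f y) := step1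
    _ ≤ _ := add_le_add termI termII

lemma ptbound (f : ℝ → ℝ) (hm : Measurable f) (hnn : ∀ x, 0 ≤ f x) {α : ℝ}
    (hα : 1 < α) {A : ℝ} (hA : 0 < A)
    (hAeq : (∫⁻ y, ENNReal.ofReal (f y ^ α)) = ENNReal.ofReal A) (x : ℝ) :
    ENNReal.ofReal (f x) ^ (α + 2) ≤
      ENNReal.ofReal (2 ^ α * A) * ∫⁻ y, ENNReal.ofReal ((f x - f y)^2/(x-y)^2) := by
  have hαpos : 0 < α := by linarith
  set D := ∫⁻ y, ENNReal.ofReal ((f x - f y)^2/(x-y)^2) with hD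
  by_cases hDtop : D = ⊤
  · rw [hDtop, ENNReal.mul_top (ENNReal.ofReal_pos.mpr (by positivity)).ne']
    exact le_top
  · set d := D.toReal with hd
    have hDeq : D = ENNReal.ofReal d := (ENNReal.ofReal_toReal hDtop).symm
    have hd0 : 0 ≤ d := ENNReal.toReal_nonneg
    -- the real pointwise inequality
    have key : ∀ r : ℝ, 0 < r →
        f x ≤ Real.sqrt (r * d / 2) + (A / (2*r)) ^ (1/α) := by
      intro r hr
      have h := ptwise f hm hnn hα x r hr
      rw [hAeq, ← hD, hDeq] at h
      have h2r : (0:ℝ) < 2*r := by linarith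
      have e1 : ENNReal.ofReal (f x) * ENNReal.ofReal (2*r)
          = ENNReal.ofReal (f x * (2*r)) := (ENNReal.ofReal_mul (hnn x)).symm
      have e2 : (ENNReal.ofReal (r^2) * ENNReal.ofReal d) ^ ((1:ℝ)/2)
            * ENNReal.ofReal (2*r) ^ ((1:ℝ)/2)
          = ENNReal.ofReal ((r^2*d) ^ ((1:ℝ)/2) * (2*r) ^ ((1:ℝ)/2)) := by
        rw [← ENNReal.ofReal_mul (by positivity),
          ENNReal.ofReal_rpow_of_nonneg (by positivity) (by norm_num),
          ENNReal.ofReal_rpow_of_nonneg (by positivity) (by norm_num),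
          ← ENNReal.ofReal_mul (by positivity)]
      have e3 : (ENNReal.ofReal A) ^ (1/α) * ENNReal.ofReal (2*r) ^ (1 - 1/α)
          = ENNReal.ofReal (A ^ (1/α) * (2*r) ^ (1 - 1/α)) := by
        rw [ENNReal.ofReal_rpow_of_nonneg hA.le (by positivity),
          ENNReal.ofReal_rpow_of_nonneg (by positivity)
            (by rw [sub_nonneg, div_le_one hαpos]; linarith),
          ← ENNReal.ofReal_mul (by positivity)]
      rw [e1, e2, e3, ← ENNReal.ofReal_add (by positivity) (by positivity)] at h
      have hreal : f x * (2*r) ≤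
          (r^2*d) ^ ((1:ℝ)/2) * (2*r) ^ ((1:ℝ)/2) + A ^ (1/α) * (2*r) ^ (1 - 1/α) :=
        (ENNReal.ofReal_le_ofReal_iff (by positivity)).mp h
      -- identify the two terms after multiplying by (2r)
      have eq1 : Real.sqrt (r * d / 2) * (2*r)
          = (r^2*d) ^ ((1:ℝ)/2) * (2*r) ^ ((1:ℝ)/2) := by
        rw [Real.sqrt_eq_rpow]
        have h2rsplit : (2*r) = (2*r) ^ ((1:ℝ)/2) * (2*r) ^ ((1:ℝ)/2) := by
          rw [← Real.rpow_add h2r]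
          norm_num
        calc (r * d / 2) ^ ((1:ℝ)/2) * (2*r)
            = ((r * d / 2) ^ ((1:ℝ)/2) * (2*r) ^ ((1:ℝ)/2)) * (2*r) ^ ((1:ℝ)/2) := by
              rw [mul_assoc, ← h2rsplit]
          _ = ((r * d / 2) * (2*r)) ^ ((1:ℝ)/2) * (2*r) ^ ((1:ℝ)/2) := by
              rw [← Real.mul_rpow (by positivity) h2r.le]
          _ = (r^2*d) ^ ((1:ℝ)/2) * (2*r) ^ ((1:ℝ)/2) := by
              congr 2
              ring
      have eq2 : (A / (2*r)) ^ (1/α) * (2*r)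
          = A ^ (1/α) * (2*r) ^ (1 - 1/α) := by
        rw [Real.div_rpow hA.le h2r.le, div_mul_eq_mul_div, mul_div_assoc]
        congr 1
        rw [Real.rpow_sub h2r, Real.rpow_one]
      have heq : (Real.sqrt (r * d / 2) + (A / (2*r)) ^ (1/α)) * (2*r)
          = (r^2*d) ^ ((1:ℝ)/2) * (2*r) ^ ((1:ℝ)/2) + A ^ (1/α) * (2*r) ^ (1 - 1/α) := by
        rw [add_mul, eq1, eq2]
      exact le_of_mul_le_mul_right (hreal.trans heq.ge) h2r
    rcases eq_or_lt_of_le hd0 with hd0' | hdpos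
    · -- d = 0 : f x = 0
      have hz : f x = 0 := by
        refine aux_vanish α A (f x) hα.le hA (hnn x) fun r hr => ?_
        have := key r hr
        rw [← hd0'] at this
        simpa using this
      rw [hz]
      simp only [ENNReal.ofReal_zero]
      rw [ENNReal.zero_rpow_of_pos (by linarith)]
      exact zero_le
    · have hb := aux_balance α A d (f x) hα.le hA hdpos (hnn x) key
      calc ENNReal.ofReal (f x) ^ (α + 2)
          = ENNReal.ofReal (f x ^ (α + 2)) :=
            ENNReal.ofReal_rpow_of_nonneg (hnn x) (by linarith)
        _ ≤ ENNReal.ofReal (2 ^ α * A * d) := ENNReal.ofReal_le_ofReal hb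
        _ = ENNReal.ofReal (2 ^ α * A) * ENNReal.ofReal d := by
            rw [← ENNReal.ofReal_mul (by positivity)]
        _ = ENNReal.ofReal (2 ^ α * A) * D := by rw [hDeq]

lemma aux_final (α A B : ℝ) (hα1 : 1 < α) (hα2 : α ≤ 2) (hA : 0 ≤ A) (hB : 0 ≤ B) :
    A ^ ((1:ℝ)/2) * (2^α * A * B) ^ ((1:ℝ)/2) ≤ 2 * A * Real.sqrt B := by
  rw [Real.mul_rpow (by positivity) hB, Real.mul_rpow (by positivity) hA,
    Real.sqrt_eq_rpow]
  have h1 : ((2:ℝ)^α) ^ ((1:ℝ)/2) = 2 ^ (α * (1/2)) := (Real.rpow_mul (by norm_num) _ _).symm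
  have h2 : (2:ℝ) ^ (α * (1/2)) ≤ 2 := by
    calc (2:ℝ) ^ (α * (1/2)) ≤ 2 ^ (1:ℝ) :=
      Real.rpow_le_rpow_of_exponent_le one_le_two (by linarith)
    _ = 2 := Real.rpow_one 2
  have h3 : A ^ ((1:ℝ)/2) * A ^ ((1:ℝ)/2) = A := by
    rw [← Real.rpow_add' hA (by norm_num)]
    norm_num
  have hP : 0 ≤ A ^ ((1:ℝ)/2) := Real.rpow_nonneg hA _
  have hQ : 0 ≤ B ^ ((1:ℝ)/2) := Real.rpow_nonneg hB _
  rw [h1]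
  calc A ^ ((1:ℝ)/2) * (2 ^ (α * (1/2)) * A ^ ((1:ℝ)/2) * B ^ ((1:ℝ)/2))
      = 2 ^ (α * (1/2)) * ((A ^ ((1:ℝ)/2) * A ^ ((1:ℝ)/2)) * B ^ ((1:ℝ)/2)) := by ring
    _ = 2 ^ (α * (1/2)) * (A * B ^ ((1:ℝ)/2)) := by rw [h3]
    _ ≤ 2 * (A * B ^ ((1:ℝ)/2)) :=
        mul_le_mul_of_nonneg_right h2 (mul_nonneg hA hQ)
    _ = 2 * A * B ^ ((1:ℝ)/2) := by ring

/-- Gagliardo–Nirenberg type interpolation: there is `C > 0` such that for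
every `q ∈ [1, 5/4]` and every measurable nonnegative `f` with
`∫ f^{2/q} < ∞` and finite Gagliardo seminorm `∬ (f(x)−f(y))²/(x−y)² < ∞`,
`∫ f^{1+2/q} ≤ C·(∫ f^{2/q})·(∬ (f(x)−f(y))²/(x−y)²)^{1/2}`. -/
theorem gagliardo_nirenberg_interpolation :
    ∃ C : ℝ, 0 < C ∧
      ∀ q : ℝ, 1 ≤ q → q ≤ 5/4 →
        ∀ f : ℝ → ℝ, Measurable f → (∀ x, 0 ≤ f x) →
          Integrable (fun x : ℝ => f x ^ (2 / q)) →
          Integrable (fun z : ℝ × ℝ => (f z.1 - f z.2)^2 / (z.1 - z.2)^2) →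
          ∫⁻ x : ℝ, ENNReal.ofReal (f x ^ (1 + 2 / q)) ≤
            ENNReal.ofReal (C * (∫ x : ℝ, f x ^ (2 / q)) *
              Real.sqrt (∫ z : ℝ × ℝ, (f z.1 - f z.2)^2 / (z.1 - z.2)^2)) := by
  refine ⟨2, by norm_num, fun q hq1 hq2 f hm hnn hInt hInt2 => ?_⟩
  have hq0 : 0 < q := by linarith
  set α := 2 / q with hαdef
  have hα1 : 1 < α := by
    rw [hαdef, lt_div_iff₀ hq0]
    linarith
  have hα2 : α ≤ 2 := by
    rw [hαdef, div_le_iff₀ hq0]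
    linarith
  have hαpos : 0 < α := by linarith
  -- basic data
  set A := ∫ x, f x ^ α with hAdef
  have hA0 : 0 ≤ A := integral_nonneg fun x => Real.rpow_nonneg (hnn x) _
  have hAeq : (∫⁻ y, ENNReal.ofReal (f y ^ α)) = ENNReal.ofReal A :=
    (ofReal_integral_eq_lintegral_ofReal hInt
      (ae_of_all _ fun x => Real.rpow_nonneg (hnn x) _)).symm
  set Br := ∫ z : ℝ × ℝ, (f z.1 - f z.2)^2 / (z.1 - z.2)^2 with hBrdef
  have hBr0 : 0 ≤ Br := integral_nonneg fun z => by positivity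
  have hmprod : Measurable fun z : ℝ × ℝ =>
      ENNReal.ofReal ((f z.1 - f z.2)^2 / (z.1 - z.2)^2) :=
    ((((hm.comp measurable_fst).sub (hm.comp measurable_snd)).pow_const 2).div
      ((measurable_fst.sub measurable_snd).pow_const 2)).ennreal_ofReal
  have hmg : Measurable fun x => ENNReal.ofReal (f x) := hm.ennreal_ofReal
  -- case A = 0
  rcases eq_or_lt_of_le hA0 with hA | hA
  · have hz : (∫⁻ y, ENNReal.ofReal (f y ^ α)) = 0 := by
      rw [hAeq, ← hA, ENNReal.ofReal_zero]
    have hae : (fun y => ENNReal.ofReal (f y ^ α)) =ᵐ[volume] 0 :=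
      (lintegral_eq_zero_iff ((hm.pow_const α).ennreal_ofReal)).mp hz
    have hf0 : ∀ᵐ x, f x = 0 := by
      filter_upwards [hae] with x hx
      simp only [Pi.zero_apply, ENNReal.ofReal_eq_zero] at hx
      have : f x ^ α = 0 := le_antisymm hx (Real.rpow_nonneg (hnn x) _)
      exact (Real.rpow_eq_zero (hnn x) (ne_of_gt hαpos)).mp this
    have : (∫⁻ x, ENNReal.ofReal (f x ^ (1 + α))) = 0 := by
      rw [← lintegral_zero]
      refine lintegral_congr_ae ?_
      filter_upwards [hf0] with x hx
      rw [hx, Real.zero_rpow (by positivity : (1:ℝ) + α ≠ 0), ENNReal.ofReal_zero]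
    rw [this]
    exact zero_le
  -- main case 0 < A
  · have hpt := ptbound f hm hnn hα1 hA hAeq
    -- Cauchy-Schwarz
    have htwo : (2:ℝ).HolderConjugate 2 := Real.HolderConjugate.two_two
    have hCS := ENNReal.lintegral_mul_le_Lp_mul_Lq (volume : Measure ℝ) htwo
      ((hmg.pow_const (α/2)).aemeasurable)
      ((hmg.pow_const ((α+2)/2)).aemeasurable)
    have eprod : ∀ x : ℝ,
        ((fun x => ENNReal.ofReal (f x) ^ (α/2)) * fun x => ENNReal.ofReal (f x) ^ ((α+2)/2)) x
          = ENNReal.ofReal (f x) ^ (1 + α) := by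
      intro x
      simp only [Pi.mul_apply]
      rw [← ENNReal.rpow_add_of_nonneg _ _ (by positivity) (by positivity)]
      norm_num
      ring_nf
    have epow1 : ∀ x : ℝ, (ENNReal.ofReal (f x) ^ (α/2)) ^ (2:ℝ)
        = ENNReal.ofReal (f x) ^ α := by
      intro x
      rw [← ENNReal.rpow_mul]
      norm_num
    have epow2 : ∀ x : ℝ, (ENNReal.ofReal (f x) ^ ((α+2)/2)) ^ (2:ℝ)
        = ENNReal.ofReal (f x) ^ (α + 2) := by
      intro x
      rw [← ENNReal.rpow_mul]
      norm_num
    simp only [eprod] at hCS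
    simp only [epow1, epow2] at hCS
    -- identify ∫⁻ g^α
    have eα : (∫⁻ x, ENNReal.ofReal (f x) ^ α) = ENNReal.ofReal A := by
      rw [← hAeq]
      exact lintegral_congr fun x => ENNReal.ofReal_rpow_of_nonneg (hnn x) hαpos.le
    -- bound ∫⁻ g^(α+2)
    have hDmeas : Measurable fun x : ℝ =>
        ∫⁻ y, ENNReal.ofReal ((f x - f y)^2/(x-y)^2) :=
      Measurable.lintegral_prod_right' (f := fun z : ℝ × ℝ =>
        ENNReal.ofReal ((f z.1 - f z.2)^2 / (z.1 - z.2)^2)) hmprod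
    have hB : (∫⁻ x, ∫⁻ y, ENNReal.ofReal ((f x - f y)^2/(x-y)^2)) = ENNReal.ofReal Br := by
      have t1 : (∫⁻ z : ℝ × ℝ, ENNReal.ofReal ((f z.1 - f z.2)^2 / (z.1 - z.2)^2))
          = ENNReal.ofReal Br :=
        (ofReal_integral_eq_lintegral_ofReal hInt2 (ae_of_all _ fun z => by positivity)).symm
      rw [← t1]
      rw [MeasureTheory.Measure.volume_eq_prod, lintegral_prod _ hmprod.aemeasurable]
    have e2 : (∫⁻ x, ENNReal.ofReal (f x) ^ (α + 2))
        ≤ ENNReal.ofReal (2 ^ α * A) * ENNReal.ofReal Br := by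
      calc (∫⁻ x, ENNReal.ofReal (f x) ^ (α + 2))
          ≤ ∫⁻ x, ENNReal.ofReal (2 ^ α * A) * ∫⁻ y, ENNReal.ofReal ((f x - f y)^2/(x-y)^2) :=
            lintegral_mono hpt
        _ = ENNReal.ofReal (2 ^ α * A) * ∫⁻ x, ∫⁻ y, ENNReal.ofReal ((f x - f y)^2/(x-y)^2) :=
            lintegral_const_mul _ hDmeas
        _ = ENNReal.ofReal (2 ^ α * A) * ENNReal.ofReal Br := by rw [hB]
    -- combine
    have LHSeq : (∫⁻ x, ENNReal.ofReal (f x ^ (1 + α)))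
        = ∫⁻ x, ENNReal.ofReal (f x) ^ (1 + α) :=
      lintegral_congr fun x =>
        (ENNReal.ofReal_rpow_of_nonneg (hnn x) (by positivity)).symm
    rw [LHSeq]
    calc (∫⁻ x, ENNReal.ofReal (f x) ^ (1 + α))
        ≤ (∫⁻ x, ENNReal.ofReal (f x) ^ α) ^ ((1:ℝ)/2)
          * (∫⁻ x, ENNReal.ofReal (f x) ^ (α + 2)) ^ ((1:ℝ)/2) := hCS
      _ ≤ (ENNReal.ofReal A) ^ ((1:ℝ)/2)
          * (ENNReal.ofReal (2 ^ α * A) * ENNReal.ofReal Br) ^ ((1:ℝ)/2) := by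
          rw [eα]
          exact mul_le_mul_right (ENNReal.rpow_le_rpow e2 (by norm_num)) _
      _ = ENNReal.ofReal (A ^ ((1:ℝ)/2) * (2 ^ α * A * Br) ^ ((1:ℝ)/2)) := by
          rw [← ENNReal.ofReal_mul (by positivity),
            ENNReal.ofReal_rpow_of_nonneg hA0 (by norm_num),
            ENNReal.ofReal_rpow_of_nonneg (by positivity) (by norm_num),
            ← ENNReal.ofReal_mul (by positivity)]
      _ ≤ ENNReal.ofReal (2 * A * Real.sqrt Br) :=
          ENNReal.ofReal_le_ofReal (aux_final α A Br hα1 hα2 hA0 hBr0)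
end
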